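/- arXiv:2604.25354 — 12 statements merged into one kernel-verified Lean document; each statement's English description precedes it below -/
import Mathlib

section
/- Let Γ_q(L, G) be a Goppa code with support set L = {α_1, …, α_n} of pairwise distinct elements of E and Goppa polynomial G ∈ E[X] of degree t with G(α_i) ≠ 0 for all i, where 1 ≤ t ≤ n − 1. Then the minimum distance of Γ_q(L, G) is equal to t + 1 if and only if there exist pairwise distinct elements α_{i_1}, α_{i_2}, …, α_{i_{t+1}} ∈ L such that, setting F(X) = ∏_{ℓ=1}^{t+1} (X − α_{i_ℓ}), for every 1 ≤ j ≤ t the element R_j = (G(α_{i_j}) · F'(α_{i_{t+1}})) / (G(α_{i_{t+1}}) · F'(α_{i_j})) of E lies in the image of F^* under the algebra map from F to E. (Note that F'(α_{i_j}) = ∏_{k ≠ j} (α_{i_j} − α_{i_k}) ≠ 0, so R_j is well defined.) -/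
open Polynomial

/-- The Goppa code `Γ_q(L, G)` with ordered support `α` and Goppa polynomial `G`:
codewords `c ∈ F^n` such that `G` divides `∑ i, c_i · ∏_{j ≠ i} (X − α_j)` in `E[X]`. -/
def goppaCode (F : Type) {E : Type} [Field F] [Field E] [Algebra F E] {n : ℕ}
    (α : Fin n → E) (G : Polynomial E) : Set (Fin n → F) :=
  {c | G ∣ ∑ i : Fin n, Polynomial.C (algebraMap F E (c i)) *
      ∏ j ∈ Finset.univ.erase i, (Polynomial.X - Polynomial.C (α j))}

/-- A (nonzero, linear) code `Γ ⊆ F^n` has minimum distance `d`: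
there is a nonzero codeword of Hamming weight `d`, and every nonzero codeword
has Hamming weight at least `d`. -/
def hasMinDist {F : Type} [Zero F] [DecidableEq F] {n : ℕ}
    (Γ : Set (Fin n → F)) (d : ℕ) : Prop :=
  (∃ c ∈ Γ, c ≠ 0 ∧ hammingNorm c = d) ∧ ∀ c ∈ Γ, c ≠ 0 → d ≤ hammingNorm c

section GoppaAux
open Finset

variable {F E : Type} [Field F] [DecidableEq F] [Field E] [Algebra F E] {n : ℕ}

variable {F E : Type} [Field F] [DecidableEq F] [Field E] [Algebra F E] {n : ℕ}

/-- auxiliary polynomial -/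
noncomputable def gop (α : Fin n → E) (c : Fin n → F) (S : Finset (Fin n)) : E[X] :=
  ∑ i ∈ S, C (algebraMap F E (c i)) * Lagrange.nodal (S.erase i) α

lemma gop_natDegree_le (α : Fin n → E) (c : Fin n → F) (S : Finset (Fin n)) :
    (gop α c S).natDegree ≤ S.card - 1 := by
  apply natDegree_sum_le_of_forall_le
  intro i hi
  refine (natDegree_C_mul_le _ _).trans ?_
  rw [Lagrange.natDegree_nodal, Finset.card_erase_of_mem hi]

lemma gop_eval (α : Fin n → E) (hα : Function.Injective α) (c : Fin n → F)
    (S : Finset (Fin n)) {i : Fin n} (hi : i ∈ S) :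
    (gop α c S).eval (α i) =
      algebraMap F E (c i) * ∏ j ∈ S.erase i, (α i - α j) := by
  rw [gop, eval_finset_sum]
  rw [Finset.sum_eq_single i]
  · rw [eval_mul, eval_C, Lagrange.eval_nodal]
  · intro l hl hne
    rw [eval_mul, Lagrange.eval_nodal_at_node (Finset.mem_erase.mpr ⟨hne.symm, hi⟩), mul_zero]
  · exact fun h => absurd hi h

lemma goppa_sum_eq (α : Fin n → E) (c : Fin n → F) :
    (∑ i : Fin n, C (algebraMap F E (c i)) *
        ∏ j ∈ Finset.univ.erase i, (X - C (α j))) =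
      Lagrange.nodal ({i | c i ≠ 0} : Finset (Fin n))ᶜ α *
        gop α c {i | c i ≠ 0} := by
  set S : Finset (Fin n) := {i | c i ≠ 0} with hS
  rw [gop, Finset.mul_sum]
  rw [← Finset.sum_filter_of_ne (p := fun i => c i ≠ 0) (s := Finset.univ)
    (by intro i _ h hci; apply h; rw [hci, map_zero, map_zero, zero_mul])]
  refine Finset.sum_congr rfl fun i hi => ?_
  have hiS : i ∈ S := hi
  have hsplit : Finset.univ.erase i = Sᶜ ∪ S.erase i := by
    ext j
    simp only [Finset.mem_erase, Finset.mem_univ, and_true, Finset.mem_union,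
      Finset.mem_compl, hS]
    by_cases hj : j ∈ ({i | c i ≠ 0} : Finset (Fin n))
    · constructor
      · intro hji; right; exact ⟨hji, hj⟩
      · rintro (h | h)
        · exact absurd hj h
        · exact h.1
    · constructor
      · intro _; left; exact hj
      · intro _ hji; subst hji; exact hj hiS
  rw [hsplit, Lagrange.nodal, Finset.prod_union (by
    rw [Finset.disjoint_left]; intro a ha ha'
    exact (Finset.mem_compl.mp ha) (Finset.mem_of_mem_erase ha')),
    ← Lagrange.nodal, ← Lagrange.nodal]
  ring

lemma coprime_nodal (α : Fin n → E) (G : E[X]) (hGα : ∀ i, G.eval (α i) ≠ 0)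
    (T : Finset (Fin n)) : IsCoprime G (Lagrange.nodal T α) := by
  rw [Lagrange.nodal]
  apply IsCoprime.prod_right
  intro j _
  refine (((irreducible_X_sub_C (α j)).coprime_iff_not_dvd).mpr ?_).symm
  rw [dvd_iff_isRoot]
  exact hGα j

lemma gop_dvd (α : Fin n → E) (G : E[X]) (hGα : ∀ i, G.eval (α i) ≠ 0)
    {c : Fin n → F} (hc : c ∈ goppaCode F α G) :
    G ∣ gop α c {i | c i ≠ 0} := by
  have h := hc
  rw [goppaCode, Set.mem_setOf_eq, goppa_sum_eq] at h
  exact (coprime_nodal α G hGα _).dvd_of_dvd_mul_left h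

lemma gop_ne_zero (α : Fin n → E) (hα : Function.Injective α) (c : Fin n → F)
    {i : Fin n} (hi : c i ≠ 0) : gop α c {i | c i ≠ 0} ≠ 0 := by
  intro h0
  have hiS : i ∈ ({i | c i ≠ 0} : Finset (Fin n)) := by
    simp [hi]
  have := gop_eval α hα c _ hiS
  rw [h0, eval_zero] at this
  have h1 : algebraMap F E (c i) ≠ 0 := by
    simpa using hi
  have h2 : (∏ j ∈ ({i | c i ≠ 0} : Finset (Fin n)).erase i, (α i - α j)) ≠ 0 := by
    rw [Finset.prod_ne_zero_iff]
    intro j hj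
    rw [sub_ne_zero]
    exact fun he => (Finset.mem_erase.mp hj).1 (hα he.symm)
  exact h1 (by
    rcases mul_eq_zero.mp this.symm with h | h
    · exact h
    · exact absurd h h2)

lemma hn_card_eq (c : Fin n → F) : hammingNorm c = ({i | c i ≠ 0} : Finset (Fin n)).card := rfl

lemma goppa_lb (α : Fin n → E) (hα : Function.Injective α) (G : E[X])
    (hG0 : G ≠ 0) (hGα : ∀ i, G.eval (α i) ≠ 0)
    {c : Fin n → F} (hc : c ∈ goppaCode F α G) (hc0 : c ≠ 0) :
    G.natDegree + 1 ≤ hammingNorm c := by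
  obtain ⟨i, hi⟩ : ∃ i, c i ≠ 0 := Function.ne_iff.mp hc0
  have hne := gop_ne_zero α hα c hi
  have hdvd := gop_dvd α G hGα hc
  have h1 := Polynomial.natDegree_le_of_dvd hdvd hne
  have h2 := gop_natDegree_le α c ({i | c i ≠ 0} : Finset (Fin n))
  have h3 : 1 ≤ ({i | c i ≠ 0} : Finset (Fin n)).card := by
    refine Finset.card_pos.mpr ⟨i, ?_⟩
    simp [hi]
  rw [hn_card_eq]
  omega

lemma prod_erase_image {k : ℕ} (σ : Fin k → Fin n) (hσ : Function.Injective σ)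
    (f : Fin n → E) (ℓ : Fin k) :
    ∏ j ∈ (Finset.univ.image σ).erase (σ ℓ), f j = ∏ l ∈ Finset.univ.erase ℓ, f (σ l) := by
  rw [← Finset.image_erase hσ, Finset.prod_image (fun a _ b _ h => hσ h)]

lemma nodal_deriv_eval {k : ℕ} (β : Fin k → E) (ℓ : Fin k) :
    (derivative (∏ l : Fin k, (X - C (β l)))).eval (β ℓ) =
      ∏ l ∈ Finset.univ.erase ℓ, (β ℓ - β l) := by
  have h : (∏ l : Fin k, (X - C (β l))) = Lagrange.nodal Finset.univ β := rfl
  rw [h, Lagrange.eval_nodal_derivative_eval_node_eq (Finset.mem_univ ℓ), Lagrange.eval_nodal]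

lemma deriv_ne_zero {k : ℕ} (β : Fin k → E) (hβ : Function.Injective β) (ℓ : Fin k) :
    (∏ l ∈ Finset.univ.erase ℓ, (β ℓ - β l)) ≠ 0 := by
  rw [Finset.prod_ne_zero_iff]
  intro l hl
  rw [sub_ne_zero]
  exact fun he => (Finset.mem_erase.mp hl).1 (hβ he.symm)

lemma forward_dir {t : ℕ} (α : Fin n → E) (hα : Function.Injective α)
    (G : E[X]) (hGdeg : G.natDegree = t) (hG0 : G ≠ 0)
    (hGα : ∀ i, G.eval (α i) ≠ 0)
    {c : Fin n → F} (hc : c ∈ goppaCode F α G) (hc0 : c ≠ 0)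
    (hw : hammingNorm c = t + 1) :
    ∃ β : Fin (t + 1) → E, Function.Injective β ∧ (∀ ℓ, β ℓ ∈ Set.range α) ∧
      ∀ j : Fin t,
        ∃ r : F, r ≠ 0 ∧ algebraMap F E r =
          (G.eval (β j.castSucc) *
            (Polynomial.derivative (∏ ℓ : Fin (t + 1), (X - C (β ℓ)))).eval (β (Fin.last t))) /
          (G.eval (β (Fin.last t)) *
            (Polynomial.derivative (∏ ℓ : Fin (t + 1), (X - C (β ℓ)))).eval (β j.castSucc)) := by
  classical
  set S : Finset (Fin n) := {i | c i ≠ 0} with hSdef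
  have hcard : S.card = t + 1 := by rw [← hn_card_eq]; exact hw
  obtain ⟨i0, hi0⟩ : ∃ i, c i ≠ 0 := Function.ne_iff.mp hc0
  have hne := gop_ne_zero α hα c hi0
  obtain ⟨k, hk⟩ := gop_dvd α G hGα hc
  have hk0 : k ≠ 0 := by rintro rfl; rw [mul_zero] at hk; exact hne hk
  have hdegk : k.natDegree = 0 := by
    have h1 : (gop α c S).natDegree ≤ t := by
      have := gop_natDegree_le α c S; omega
    have h2 : (gop α c S).natDegree = G.natDegree + k.natDegree := by
      rw [hk, Polynomial.natDegree_mul hG0 hk0]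
    omega
  obtain ⟨lam, hlam⟩ := Polynomial.natDegree_eq_zero.mp hdegk
  have hlam0 : lam ≠ 0 := by rintro rfl; rw [map_zero] at hlam; exact hk0 hlam.symm
  -- enumerate S
  have e := S.orderIsoOfFin hcard
  set σ : Fin (t + 1) → Fin n := fun ℓ => (e ℓ : Fin n) with hσdef
  have hσinj : Function.Injective σ := fun a b h => e.injective (Subtype.ext h)
  have hσS : ∀ ℓ, σ ℓ ∈ S := fun ℓ => (e ℓ).2
  have himg : Finset.univ.image σ = S := by
    apply Finset.eq_of_subset_of_card_le
    · intro x hx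
      obtain ⟨ℓ, _, rfl⟩ := Finset.mem_image.mp hx
      exact hσS ℓ
    · rw [Finset.card_image_of_injective _ hσinj, Finset.card_univ, Fintype.card_fin, hcard]
  set β : Fin (t + 1) → E := fun ℓ => α (σ ℓ) with hβdef
  have hβinj : Function.Injective β := fun a b h => hσinj (hα h)
  have hcσ : ∀ ℓ, c (σ ℓ) ≠ 0 := by
    intro ℓ
    have := hσS ℓ
    rw [hSdef, Finset.mem_filter] at this
    exact this.2
  -- key evaluation identity
  have key : ∀ ℓ, algebraMap F E (c (σ ℓ)) * (∏ l ∈ Finset.univ.erase ℓ, (β ℓ - β l)) =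
      lam * G.eval (β ℓ) := by
    intro ℓ
    have hprod : ∏ j ∈ S.erase (σ ℓ), (α (σ ℓ) - α j) =
        ∏ l ∈ Finset.univ.erase ℓ, (β ℓ - β l) := by
      rw [← himg, prod_erase_image σ hσinj]
    have h1 := gop_eval α hα c (S := S) (hσS ℓ)
    rw [hprod] at h1
    have h2 : (gop α c S).eval (α (σ ℓ)) = G.eval (α (σ ℓ)) * lam := by
      rw [hk, ← hlam, eval_mul, eval_C]
    rw [h1] at h2
    rw [h2]; ring
  refine ⟨β, hβinj, fun ℓ => ⟨σ ℓ, rfl⟩, fun j => ?_⟩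
  refine ⟨c (σ j.castSucc) / c (σ (Fin.last t)), div_ne_zero (hcσ _) (hcσ _), ?_⟩
  rw [map_div₀]
  rw [nodal_deriv_eval, nodal_deriv_eval]
  have h1 := key j.castSucc
  have h2 := key (Fin.last t)
  have hD1 := deriv_ne_zero β hβinj j.castSucc
  have hD2 := deriv_ne_zero β hβinj (Fin.last t)
  have hG1 : G.eval (β j.castSucc) ≠ 0 := hGα _
  have hG2 : G.eval (β (Fin.last t)) ≠ 0 := hGα _
  have hc1 : algebraMap F E (c (σ j.castSucc)) ≠ 0 := by simpa using hcσ j.castSucc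
  have hc2 : algebraMap F E (c (σ (Fin.last t))) ≠ 0 := by simpa using hcσ (Fin.last t)
  rw [div_eq_div_iff hc2 (mul_ne_zero hG2 hD1)]
  linear_combination G.eval (β (Fin.last t)) * h1 - G.eval (β j.castSucc) * h2

lemma backward_dir {t : ℕ} (α : Fin n → E) (hα : Function.Injective α)
    (G : E[X]) (hGdeg : G.natDegree = t) (hG0 : G ≠ 0)
    (hGα : ∀ i, G.eval (α i) ≠ 0)
    (β : Fin (t + 1) → E) (hβinj : Function.Injective β)
    (hran : ∀ ℓ, β ℓ ∈ Set.range α)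
    (hR : ∀ j : Fin t,
        ∃ r : F, r ≠ 0 ∧ algebraMap F E r =
          (G.eval (β j.castSucc) *
            (Polynomial.derivative (∏ ℓ : Fin (t + 1), (X - C (β ℓ)))).eval (β (Fin.last t))) /
          (G.eval (β (Fin.last t)) *
            (Polynomial.derivative (∏ ℓ : Fin (t + 1), (X - C (β ℓ)))).eval (β j.castSucc))) :
    ∃ c ∈ goppaCode F α G, c ≠ 0 ∧ hammingNorm c = t + 1 := by
  classical
  choose σ hσβ using hran
  have hσinj : Function.Injective σ := by
    intro a b h
    apply hβinj
    rw [← hσβ a, ← hσβ b, h]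
  choose r hr0 hrval using hR
  set r' : Fin (t + 1) → F := Fin.snoc r 1 with hr'def
  have hr'ne : ∀ ℓ, r' ℓ ≠ 0 := by
    intro ℓ
    induction ℓ using Fin.lastCases with
    | last => rw [hr'def, Fin.snoc_last]; exact one_ne_zero
    | cast j => rw [hr'def, Fin.snoc_castSucc]; exact hr0 j
  set c : Fin n → F := Function.extend σ r' 0 with hcdef
  have hcσ : ∀ ℓ, c (σ ℓ) = r' ℓ := fun ℓ => hσinj.extend_apply r' 0 ℓ
  have hcoff : ∀ i, (¬∃ ℓ, σ ℓ = i) → c i = 0 := by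
    intro i hi
    rw [hcdef, Function.extend_apply' _ _ _ hi]; rfl
  set S : Finset (Fin n) := {i | c i ≠ 0} with hSdef
  have hS : S = Finset.univ.image σ := by
    ext i
    simp only [hSdef, Finset.mem_filter, Finset.mem_univ, true_and, Finset.mem_image]
    constructor
    · intro hi
      by_contra h
      push_neg at h
      exact hi (hcoff i (by rintro ⟨ℓ, rfl⟩; exact h ℓ rfl))
    · rintro ⟨ℓ, _, rfl⟩
      rw [hcσ]
      exact hr'ne ℓ
  have hcard : S.card = t + 1 := by
    rw [hS, Finset.card_image_of_injective _ hσinj, Finset.card_univ, Fintype.card_fin]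
  have hβσ : ∀ ℓ, β ℓ = α (σ ℓ) := fun ℓ => (hσβ ℓ).symm
  have hGβ : ∀ ℓ, G.eval (β ℓ) ≠ 0 := fun ℓ => by rw [hβσ]; exact hGα _
  have hD : ∀ ℓ, (∏ l ∈ Finset.univ.erase ℓ, (β ℓ - β l)) ≠ 0 := deriv_ne_zero β hβinj
  set lam : E := (∏ l ∈ Finset.univ.erase (Fin.last t), (β (Fin.last t) - β l)) /
    G.eval (β (Fin.last t)) with hlamdef
  have hlam0 : lam ≠ 0 := div_ne_zero (hD _) (hGβ _)
  have key : ∀ ℓ, algebraMap F E (r' ℓ) * (∏ l ∈ Finset.univ.erase ℓ, (β ℓ - β l)) =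
      lam * G.eval (β ℓ) := by
    intro ℓ
    induction ℓ using Fin.lastCases with
    | last =>
      rw [hr'def, Fin.snoc_last, map_one, one_mul, hlamdef]
      exact (div_mul_cancel₀ _ (hGβ _)).symm
    | cast j =>
      rw [hr'def, Fin.snoc_castSucc]
      have h := hrval j
      rw [nodal_deriv_eval, nodal_deriv_eval] at h
      rw [h, hlamdef]
      have hd1 := hD j.castSucc
      have hd2 := hD (Fin.last t)
      have hg1 := hGβ j.castSucc
      have hg2 := hGβ (Fin.last t)
      field_simp
  -- gop = C lam * G
  have heq : gop α c S = C lam * G := by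
    rw [← sub_eq_zero]
    apply Polynomial.eq_zero_of_natDegree_lt_card_of_eval_eq_zero _ hβinj
    · intro ℓ
      rw [eval_sub, eval_mul, eval_C]
      have hprod : ∏ j ∈ S.erase (σ ℓ), (α (σ ℓ) - α j) =
          ∏ l ∈ Finset.univ.erase ℓ, (β ℓ - β l) := by
        rw [hS, prod_erase_image σ hσinj]
        refine Finset.prod_congr rfl fun l _ => by rw [hβσ, hβσ]
      have h1 : (σ ℓ) ∈ S := by rw [hS]; exact Finset.mem_image_of_mem σ (Finset.mem_univ ℓ)
      have h2 := gop_eval α hα c (S := S) h1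
      rw [hprod, hcσ] at h2
      rw [hβσ, h2, ← hβσ]
      rw [key ℓ]
      ring
    · rw [Fintype.card_fin]
      have h1 : (gop α c S).natDegree ≤ t := by
        have := gop_natDegree_le α c S; omega
      have h2 : (C lam * G).natDegree ≤ t := by
        refine (natDegree_C_mul_le _ _).trans ?_; omega
      have := Polynomial.natDegree_sub_le (gop α c S) (C lam * G)
      omega
  refine ⟨c, ?_, ?_, ?_⟩
  · rw [goppaCode, Set.mem_setOf_eq, goppa_sum_eq, ← hSdef, heq]
    exact ⟨Lagrange.nodal Sᶜ α * C lam, by ring⟩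
  · intro h0
    have := hcσ (Fin.last t)
    rw [h0] at this
    exact hr'ne (Fin.last t) this.symm
  · rw [hn_card_eq, ← hSdef, hcard]

end GoppaAux

/-- criterion for a Goppa code to attain its designed distance.
The Goppa code `Γ_q(L,G)` with support of `n` pairwise distinct elements and Goppa
polynomial `G` of degree `t` (with `1 ≤ t ≤ n - 1` and `G(α_i) ≠ 0` for all `i`) has
minimum distance `t + 1` if and only if there exist pairwise distinct
`α_{i_1}, …, α_{i_{t+1}} ∈ L` such that, with `F(X) = ∏_ℓ (X - α_{i_ℓ})`, each
`R_j = G(α_{i_j})F'(α_{i_{t+1}}) / (G(α_{i_{t+1}})F'(α_{i_j}))` lies in the image of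
`F^*` under the algebra map. -/
theorem goppa_minDist_iff
    (q m n t : ℕ) (hq : IsPrimePow q) (hm : 0 < m)
    (F E : Type) [Field F] [Fintype F] [DecidableEq F] [Field E] [Fintype E] [Algebra F E]
    (hF : Fintype.card F = q) (hE : Fintype.card E = q ^ m)
    (α : Fin n → E) (hα : Function.Injective α)
    (G : Polynomial E) (hGdeg : G.natDegree = t) (hG0 : G ≠ 0)
    (ht1 : 1 ≤ t) (htn : t ≤ n - 1)
    (hGα : ∀ i, G.eval (α i) ≠ 0) :
    hasMinDist (goppaCode F α G) (t + 1) ↔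
      ∃ β : Fin (t + 1) → E, Function.Injective β ∧ (∀ ℓ, β ℓ ∈ Set.range α) ∧
        ∀ j : Fin t,
          ∃ r : F, r ≠ 0 ∧ algebraMap F E r =
            (G.eval (β j.castSucc) *
              (Polynomial.derivative
                (∏ ℓ : Fin (t + 1), (X - C (β ℓ)))).eval (β (Fin.last t))) /
            (G.eval (β (Fin.last t)) *
              (Polynomial.derivative
                (∏ ℓ : Fin (t + 1), (X - C (β ℓ)))).eval (β j.castSucc)) := by
  constructor
  · rintro ⟨⟨c, hc, hc0, hw⟩, -⟩
    exact forward_dir α hα G hGdeg hG0 hGα hc hc0 hw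
  · rintro ⟨β, hβinj, hran, hR⟩
    obtain ⟨c, hc, hc0, hw⟩ := backward_dir α hα G hGdeg hG0 hGα β hβinj hran hR
    refine ⟨⟨c, hc, hc0, hw⟩, fun c' hc' hc'0 => ?_⟩
    have h := goppa_lb α hα G hG0 hGα hc' hc'0
    omega
end

section
/- Let q be a power of a prime p and let t be a positive integer with p ∤ t + 1. Let F(X) ∈ E[X] be a polynomial of degree t + 1 having t + 1 pairwise distinct roots α_{i_1}, …, α_{i_{t+1}} ∈ E, and define G(X) = (t+1)^{-1} · F'(X) ∈ E[X]. Then deg G = t and G(α_{i_j}) ≠ 0 for all 1 ≤ j ≤ t + 1; moreover, for every support set L ⊆ E that contains {α_{i_1}, …, α_{i_{t+1}}} and satisfies G(α) ≠ 0 for all α ∈ L, the Goppa code Γ_q(L, G) has minimum distance d = t + 1. -/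
open Polynomial

section GoppaAux

variable {E : Type} [Field E]

lemma goppa_derivative_finset_prod {ι : Type*} [DecidableEq ι] (s : Finset ι) (f : ι → E[X]) :
    derivative (∏ i ∈ s, f i) = ∑ i ∈ s, (∏ j ∈ s.erase i, f j) * derivative (f i) := by
  rw [Finset.prod_eq_multiset_prod, Polynomial.derivative_prod, Finset.sum_eq_multiset_sum]
  apply congrArg Multiset.sum
  apply Multiset.map_congr rfl
  intro i _
  rw [Finset.prod_eq_multiset_prod]
  rfl

lemma goppa_eval_sum_prod {ι : Type*} [DecidableEq ι] (s : Finset ι) (d β : ι → E)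
    {i₀ : ι} (hi₀ : i₀ ∈ s) :
    Polynomial.eval (β i₀) (∑ i ∈ s, C (d i) * ∏ j ∈ s.erase i, (X - C (β j))) =
      d i₀ * ∏ j ∈ s.erase i₀, (β i₀ - β j) := by
  rw [Polynomial.eval_finset_sum, Finset.sum_eq_single i₀]
  · simp [Polynomial.eval_prod]
  · intro i _ hne
    rw [eval_mul, eval_prod]
    apply mul_eq_zero_of_right
    apply Finset.prod_eq_zero (Finset.mem_erase.2 ⟨hne.symm, hi₀⟩)
    simp
  · intro h; exact absurd hi₀ h

lemma goppa_sum_prod_split {n : ℕ} (β : Fin n → E) (d : Fin n → E) (s : Finset (Fin n))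
    (hd : ∀ i ∉ s, d i = 0) :
    ∑ i : Fin n, C (d i) * ∏ j ∈ Finset.univ.erase i, (X - C (β j)) =
      (∑ i ∈ s, C (d i) * ∏ j ∈ s.erase i, (X - C (β j))) *
        ∏ j ∈ Finset.univ \ s, (X - C (β j)) := by
  rw [Finset.sum_mul,
    ← Finset.sum_subset (Finset.subset_univ s) (fun i _ hi => by rw [hd i hi]; simp)]
  apply Finset.sum_congr rfl
  intro i hi
  rw [mul_assoc]
  congr 1
  rw [← Finset.prod_union (by
    apply Finset.disjoint_left.2
    intro j hj hj'
    exact (Finset.mem_sdiff.1 hj').2 (Finset.mem_erase.1 hj).2)]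
  apply Finset.prod_congr _ (fun _ _ => rfl)
  ext j
  simp only [Finset.mem_erase, Finset.mem_union, Finset.mem_sdiff, Finset.mem_univ, true_and, and_true]
  constructor
  · intro hj
    by_cases hjs : j ∈ s
    · exact Or.inl ⟨hj, hjs⟩
    · exact Or.inr hjs
  · rintro (⟨hj, _⟩ | hjs)
    · exact hj
    · intro h; subst h; exact hjs hi

lemma goppa_isCoprime_of_eval_ne_zero {G : E[X]} {a : E} (h : G.eval a ≠ 0) :
    IsCoprime (X - C a) G :=
  ((irreducible_X_sub_C a).coprime_iff_not_dvd).2 fun hdvd => h (dvd_iff_isRoot.1 hdvd)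

end GoppaAux

/-- Corollary: constructive Goppa codes from derivatives.
If `p ∤ t + 1` and `P ∈ E[X]` has degree `t + 1` with `t + 1` pairwise distinct roots
`α_1, …, α_{t+1} ∈ E`, then `G = (t+1)⁻¹ P'` has degree `t`, does not vanish at any root
of `P`, and for every support set `L ⊆ E` containing the roots on which `G` does not
vanish, the Goppa code `Γ_q(L, G)` has minimum distance `t + 1`. -/
theorem goppa_derivative_construction
    (p e q m t : ℕ) (hp : p.Prime) (hq : q = p ^ e) (he : 0 < e) (hm : 0 < m)
    (ht : 0 < t) (hpt : ¬ p ∣ (t + 1))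
    (F E : Type) [Field F] [Fintype F] [DecidableEq F] [Field E] [Fintype E] [Algebra F E]
    (hF : Fintype.card F = q) (hE : Fintype.card E = q ^ m)
    (P : Polynomial E) (hPdeg : P.natDegree = t + 1) (hP0 : P ≠ 0)
    (α : Fin (t + 1) → E) (hα : Function.Injective α) (hroots : ∀ ℓ, P.eval (α ℓ) = 0)
    (G : Polynomial E) (hG : G = Polynomial.C ((t + 1 : E))⁻¹ * Polynomial.derivative P) :
    G.natDegree = t ∧ (∀ j, G.eval (α j) ≠ 0) ∧
      ∀ (n : ℕ) (β : Fin n → E), Function.Injective β →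
        (∀ ℓ, α ℓ ∈ Set.range β) → (∀ i, G.eval (β i) ≠ 0) →
        hasMinDist (goppaCode F β G) (t + 1) := by
  classical
  subst hG
  -- characteristic of E is p
  haveI hcharE : CharP E p := by
    obtain ⟨k, hk, hcard⟩ := FiniteField.card E (ringChar E)
    have h1 : Fintype.card E = p ^ (e * m) := by rw [hE, hq, ← pow_mul]
    have h2 : ringChar E = p := by
      have hd : ringChar E ∣ p ^ (e * m) := by
        rw [← h1, hcard]
        exact dvd_pow_self _ (by positivity)
      exact (Nat.prime_dvd_prime_iff_eq hk hp).1 (hk.dvd_of_dvd_pow hd)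
    rw [← h2]; exact ringChar.charP E
  have ht1 : ((t : E) + 1) ≠ 0 := by
    have h := (CharP.cast_eq_zero_iff E p (t + 1)).not.2 hpt
    push_cast at h
    exact h
  have ha : P.leadingCoeff ≠ 0 := leadingCoeff_ne_zero.2 hP0
  set a := P.leadingCoeff with ha_def
  -- P as a product of linear factors
  have hM : (Finset.univ.val.map α : Multiset E) = P.roots := by
    apply Multiset.eq_of_le_of_card_le
    · rw [Multiset.le_iff_subset (Finset.univ.nodup.map hα)]
      intro x hx
      obtain ⟨ℓ, _, rfl⟩ := Multiset.mem_map.1 hx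
      rw [Polynomial.mem_roots hP0]
      exact hroots ℓ
    · calc Multiset.card P.roots ≤ P.natDegree := P.card_roots'
        _ = Multiset.card (Finset.univ.val.map α) := by simp [hPdeg]
  have hcardroots : Multiset.card P.roots = P.natDegree := by
    rw [← hM, Multiset.card_map]; simp [hPdeg]
  have hProd : P = C a * ∏ ℓ : Fin (t + 1), (X - C (α ℓ)) := by
    conv_lhs => rw [← Polynomial.C_leadingCoeff_mul_prod_multiset_X_sub_C hcardroots]
    rw [← hM, Multiset.map_map, Finset.prod_eq_multiset_prod]
    rfl
  set T0 : E[X] := ∑ ℓ : Fin (t + 1), ∏ m ∈ Finset.univ.erase ℓ, (X - C (α m)) with hT0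
  have hderiv : derivative P = C a * T0 := by
    rw [hProd, derivative_mul, derivative_C, zero_mul, zero_add,
      goppa_derivative_finset_prod]
    congr 1
    apply Finset.sum_congr rfl
    intro ℓ _
    rw [derivative_sub, derivative_X, derivative_C, sub_zero, mul_one]
  -- degree of G
  have hcoeff : (derivative P).coeff t = a * ((t : E) + 1) := by
    rw [coeff_derivative, ← hPdeg, Polynomial.coeff_natDegree]
  have hnd : (derivative P).natDegree = t := by
    apply le_antisymm
    · have h := Polynomial.natDegree_derivative_le P
      rw [hPdeg] at h
      simpa using h
    · exact Polynomial.le_natDegree_of_ne_zero (by rw [hcoeff]; exact mul_ne_zero ha ht1)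
  have hGdeg : (C ((t : E) + 1)⁻¹ * derivative P).natDegree = t := by
    rw [Polynomial.natDegree_C_mul (inv_ne_zero ht1), hnd]
  -- evaluation of G at the roots
  have hT0eval : ∀ j, T0.eval (α j) = ∏ m ∈ Finset.univ.erase j, (α j - α m) := by
    intro j
    have h := goppa_eval_sum_prod Finset.univ (fun _ => (1 : E)) α (Finset.mem_univ j)
    simpa using h
  have hGeval : ∀ j, (C ((t : E) + 1)⁻¹ * derivative P).eval (α j) ≠ 0 := by
    intro j
    rw [eval_mul, eval_C, hderiv, eval_mul, eval_C, hT0eval]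
    refine mul_ne_zero (inv_ne_zero ht1) (mul_ne_zero ha ?_)
    refine Finset.prod_ne_zero_iff.2 fun m hm => sub_ne_zero.2 ?_
    exact fun h => (Finset.mem_erase.1 hm).1 (hα h).symm
  have hk0 : ((t : E) + 1)⁻¹ * a ≠ 0 := mul_ne_zero (inv_ne_zero ht1) ha
  have hT0G : T0 = C (((t : E) + 1)⁻¹ * a)⁻¹ * (C ((t : E) + 1)⁻¹ * derivative P) := by
    rw [hderiv, ← mul_assoc, ← C_mul, ← mul_assoc, ← C_mul,
      show (((t : E) + 1)⁻¹ * a)⁻¹ * ((t : E) + 1)⁻¹ * a = 1 by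
        rw [mul_assoc]; exact inv_mul_cancel₀ hk0,
      C_1, one_mul]
  refine ⟨hGdeg, hGeval, ?_⟩
  intro n β hβ hsub hGβ
  constructor
  · -- existence of a codeword of weight t + 1
    choose ι hι using fun ℓ => hsub ℓ
    have hιinj : Function.Injective ι := fun ℓ ℓ' h => hα (by rw [← hι ℓ, ← hι ℓ', h])
    set s : Finset (Fin n) := Finset.univ.image ι with hs
    refine ⟨fun i => if i ∈ s then 1 else 0, ?_, ?_, ?_⟩
    · show (C ((t : E) + 1)⁻¹ * derivative P) ∣ _
      rw [goppa_sum_prod_split β (fun i => algebraMap F E (if i ∈ s then 1 else 0)) s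
        (fun i hi => by simp [hi])]
      apply Dvd.dvd.mul_right
      have hT : (∑ i ∈ s, C (algebraMap F E (if i ∈ s then (1 : F) else 0)) *
          ∏ j ∈ s.erase i, (X - C (β j))) = T0 := by
        rw [hs, Finset.sum_image (fun x _ y _ h => hιinj h)]
        apply Finset.sum_congr rfl
        intro ℓ _
        rw [if_pos (Finset.mem_image_of_mem ι (Finset.mem_univ ℓ)), map_one, map_one, one_mul,
          ← Finset.image_erase hιinj, Finset.prod_image (fun x _ y _ h => hιinj h)]
        apply Finset.prod_congr rfl
        intro m _
        rw [hι m]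
      rw [hT, hT0G]
      exact Dvd.intro_left _ rfl
    · intro h0
      have h := congrFun h0 (ι ⟨0, by omega⟩)
      rw [if_pos (Finset.mem_image_of_mem ι (Finset.mem_univ _))] at h
      exact one_ne_zero h
    · have h : hammingNorm (fun i => if i ∈ s then (1 : F) else 0) = s.card := by
        unfold hammingNorm
        congr 1
        ext i
        by_cases hi : i ∈ s <;> simp [hi]
      rw [h, hs, Finset.card_image_of_injective _ hιinj, Finset.card_univ, Fintype.card_fin]
  · -- lower bound
    intro c hc hc0
    simp only [goppaCode, Set.mem_setOf_eq] at hc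
    set s : Finset (Fin n) := Finset.univ.filter (fun i => c i ≠ 0) with hs
    have hd0 : ∀ i ∉ s, algebraMap F E (c i) = 0 := by
      intro i hi
      rw [hs, Finset.mem_filter, not_and, not_not] at hi
      rw [hi (Finset.mem_univ i), map_zero]
    rw [goppa_sum_prod_split β _ s hd0] at hc
    set T := ∑ i ∈ s, C (algebraMap F E (c i)) * ∏ j ∈ s.erase i, (X - C (β j)) with hT
    have hcop : IsCoprime (C ((t : E) + 1)⁻¹ * derivative P)
        (∏ j ∈ Finset.univ \ s, (X - C (β j))) :=
      IsCoprime.prod_right fun j _ => (goppa_isCoprime_of_eval_ne_zero (hGβ j)).symm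
    have hdvdT : (C ((t : E) + 1)⁻¹ * derivative P) ∣ T := hcop.dvd_of_dvd_mul_right hc
    obtain ⟨i₀, hi₀⟩ : s.Nonempty := by
      obtain ⟨i, hi⟩ := Function.ne_iff.1 hc0
      refine ⟨i, ?_⟩
      rw [hs, Finset.mem_filter]
      exact ⟨Finset.mem_univ i, by simpa using hi⟩
    have hci₀ : c i₀ ≠ 0 := by
      have := hi₀; rw [hs, Finset.mem_filter] at this; exact this.2
    have hTne : T ≠ 0 := by
      intro h0
      have he := goppa_eval_sum_prod s (fun i => algebraMap F E (c i)) β hi₀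
      rw [← hT, h0, eval_zero] at he
      refine mul_ne_zero ?_ ?_ he.symm
      · exact (map_ne_zero_iff _ (algebraMap F E).injective).2 hci₀
      · refine Finset.prod_ne_zero_iff.2 fun j hj => sub_ne_zero.2 ?_
        exact fun h => (Finset.mem_erase.1 hj).1 (hβ h).symm
    have hTdeg : T.natDegree ≤ s.card - 1 := by
      apply Polynomial.natDegree_sum_le_of_forall_le
      intro i hi
      refine natDegree_mul_le.trans ?_
      rw [natDegree_C, zero_add]
      refine (Polynomial.natDegree_prod_le _ _).trans ?_
      simp [Polynomial.natDegree_X_sub_C, Finset.card_erase_of_mem hi]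
    have hle := Polynomial.natDegree_le_of_dvd hdvdT hTne
    rw [hGdeg] at hle
    have hpos : 1 ≤ s.card := Finset.card_pos.2 ⟨i₀, hi₀⟩
    have hnorm : hammingNorm c = s.card := rfl
    rw [hnorm]
    omega
end

section
/- Let q be a prime power and let t be a positive integer. Let F(X) ∈ E[X] be a polynomial of degree t + 1 having t + 1 pairwise distinct roots α_{i_1}, …, α_{i_{t+1}} ∈ E. Let w_1, …, w_{t+1} be elements of the image of F^* in E under the algebra map with w_1 + ⋯ + w_{t+1} ≠ 0, and define G(X) = Σ_{ℓ=1}^{t+1} w_ℓ · F(X)/(X − α_{i_ℓ}) ∈ E[X]. Then G has degree t and G(α_{i_ℓ}) = w_ℓ · F'(α_{i_ℓ}) ≠ 0 for all 1 ≤ ℓ ≤ t + 1; moreover, for every support set L ⊆ E containing {α_{i_1}, …, α_{i_{t+1}}} and satisfying G(α) ≠ 0 for all α ∈ L, the Goppa code Γ_q(L, G) has minimum distance d = t + 1. -/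
open Polynomial

section GoppaHelpers

open Finset

variable {K : Type*} [Field K] [DecidableEq K]

variable {K : Type*} [Field K] [DecidableEq K]

/-- Factoring out the non-support part of the Goppa syndrome polynomial. -/
lemma goppa_support_factor {n : ℕ} (β : Fin n → K) (c : Fin n → K) (S : Finset (Fin n))
    (hc : ∀ i ∉ S, c i = 0) :
    ∑ i : Fin n, C (c i) * ∏ j ∈ univ.erase i, (X - C (β j))
      = (∏ j ∈ Sᶜ, (X - C (β j))) *
        ∑ i ∈ S, C (c i) * ∏ j ∈ S.erase i, (X - C (β j)) := by
  rw [Finset.mul_sum]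
  rw [← Finset.sum_subset (Finset.subset_univ S)
    (fun i _ hi => by rw [hc i hi, map_zero, zero_mul])]
  refine Finset.sum_congr rfl fun i hi => ?_
  have hsplit : univ.erase i = S.erase i ∪ Sᶜ := by
    ext j
    by_cases hj : j ∈ S <;> by_cases hij : j = i <;>
      simp_all [Finset.mem_erase, Finset.mem_compl]
  have hdisj : Disjoint (S.erase i) Sᶜ := by
    simp [Finset.disjoint_left, Finset.mem_erase]
  rw [hsplit, Finset.prod_union hdisj]
  ring

lemma goppa_fS_eval {n : ℕ} (β : Fin n → K) (c : Fin n → K) (S : Finset (Fin n))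
    {i₀ : Fin n} (hi₀ : i₀ ∈ S) :
    (∑ i ∈ S, C (c i) * ∏ j ∈ S.erase i, (X - C (β j))).eval (β i₀)
      = c i₀ * ∏ j ∈ S.erase i₀, (β i₀ - β j) := by
  rw [eval_finset_sum]
  rw [Finset.sum_eq_single i₀]
  · simp [eval_prod]
  · intro i hi hne
    have h2 : i₀ ∈ S.erase i := Finset.mem_erase.2 ⟨fun h => hne h.symm, hi₀⟩
    rw [eval_mul, eval_prod, Finset.prod_eq_zero h2 (by simp), mul_zero]
  · intro h; exact absurd hi₀ h

lemma goppa_fS_natDegree_lt {n : ℕ} (β : Fin n → K) (c : Fin n → K) (S : Finset (Fin n))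
    (hS : S.Nonempty) :
    (∑ i ∈ S, C (c i) * ∏ j ∈ S.erase i, (X - C (β j))).natDegree < S.card := by
  have h1 : 0 < S.card := Finset.card_pos.2 hS
  refine lt_of_le_of_lt (Polynomial.natDegree_sum_le_of_forall_le S _ fun i hi => ?_)
    (Nat.sub_lt h1 one_pos)
  refine le_trans (natDegree_C_mul_le _ _) ?_
  refine le_trans (Polynomial.natDegree_prod_le _ _) ?_
  have : ∑ j ∈ S.erase i, (X - C (β j)).natDegree ≤ ∑ _j ∈ S.erase i, 1 :=
    Finset.sum_le_sum fun j _ => natDegree_X_sub_C_le (β j)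
  simpa [Finset.card_erase_of_mem hi] using this

lemma goppa_min_dist_lower {n t : ℕ} (β : Fin n → K) (hβ : Function.Injective β)
    (G : K[X]) (hGdeg : G.natDegree = t) (hGroot : ∀ i, G.eval (β i) ≠ 0)
    (c : Fin n → K) (hcne : c ≠ 0)
    (hc : G ∣ ∑ i : Fin n, C (c i) * ∏ j ∈ univ.erase i, (X - C (β j))) :
    t + 1 ≤ #{i | c i ≠ 0} := by
  classical
  set S : Finset (Fin n) := {i | c i ≠ 0} with hS
  have hmem : ∀ i, i ∈ S ↔ c i ≠ 0 := fun i => by simp [hS]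
  have hSne : S.Nonempty := by
    obtain ⟨i, hi⟩ := Function.ne_iff.1 hcne
    exact ⟨i, (hmem i).2 hi⟩
  rw [goppa_support_factor β c S (fun i hi => by_contra fun h => hi ((hmem i).2 h))] at hc
  set fS := ∑ i ∈ S, C (c i) * ∏ j ∈ S.erase i, (X - C (β j)) with hfS
  have hcop : IsCoprime G (∏ j ∈ Sᶜ, (X - C (β j))) :=
    IsCoprime.prod_right fun j _ =>
      (((irreducible_X_sub_C (β j)).coprime_iff_not_dvd).2
        (fun hd => hGroot j (dvd_iff_isRoot.1 hd))).symm
  have hdvd : G ∣ fS := hcop.dvd_of_dvd_mul_left hc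
  obtain ⟨i₀, hi₀⟩ := hSne
  have hfSne : fS ≠ 0 := fun h0 => by
    have := goppa_fS_eval β c S hi₀
    rw [← hfS, h0, eval_zero] at this
    refine ((hmem i₀).1 hi₀) ?_
    rcases mul_eq_zero.1 this.symm with h | h
    · exact h
    · obtain ⟨j, hj, hj0⟩ := Finset.prod_eq_zero_iff.1 h
      exact absurd (hβ (sub_eq_zero.1 hj0)).symm (Finset.mem_erase.1 hj).1
  have h1 : t ≤ fS.natDegree := hGdeg ▸ Polynomial.natDegree_le_of_dvd hdvd hfSne
  have h2 : fS.natDegree < S.card := goppa_fS_natDegree_lt β c S ⟨i₀, hi₀⟩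
  omega

end GoppaHelpers

/-- Remark: constructive Goppa codes from weighted derivatives.
Let `P ∈ E[X]` have degree `t + 1` with `t + 1` pairwise distinct roots
`α_1, …, α_{t+1} ∈ E`, and let `w_1, …, w_{t+1}` lie in the image of `F^*` in `E`
with `∑ w_ℓ ≠ 0`. Then `G = ∑_ℓ w_ℓ · P/(X - α_ℓ)` has degree `t`,
`G(α_ℓ) = w_ℓ P'(α_ℓ) ≠ 0`, and for every support set `L ⊆ E` containing the roots
on which `G` does not vanish, the Goppa code `Γ_q(L, G)` has minimum distance `t + 1`. -/
theorem goppa_weighted_derivative_construction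
    (q m t : ℕ) (hq : IsPrimePow q) (hm : 0 < m) (ht : 0 < t)
    (F E : Type) [Field F] [Fintype F] [DecidableEq F] [Field E] [Fintype E] [Algebra F E]
    (hF : Fintype.card F = q) (hE : Fintype.card E = q ^ m)
    (P : Polynomial E) (hPdeg : P.natDegree = t + 1) (hP0 : P ≠ 0)
    (α : Fin (t + 1) → E) (hα : Function.Injective α) (hroots : ∀ ℓ, P.eval (α ℓ) = 0)
    (w : Fin (t + 1) → E) (hw : ∀ ℓ, ∃ r : F, r ≠ 0 ∧ algebraMap F E r = w ℓ)
    (hwsum : ∑ ℓ, w ℓ ≠ 0)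
    (G : Polynomial E) (hG : G = ∑ ℓ, Polynomial.C (w ℓ) * (P /ₘ (X - C (α ℓ)))) :
    G.natDegree = t ∧
    (∀ ℓ, G.eval (α ℓ) = w ℓ * (Polynomial.derivative P).eval (α ℓ) ∧ G.eval (α ℓ) ≠ 0) ∧
      ∀ (n : ℕ) (β : Fin n → E), Function.Injective β →
        (∀ ℓ, α ℓ ∈ Set.range β) → (∀ i, G.eval (β i) ≠ 0) →
        hasMinDist (goppaCode F β G) (t + 1) := by
  classical
  -- Step 1: factor P
  set lc := P.leadingCoeff with hlcdef
  have hlc : lc ≠ 0 := leadingCoeff_ne_zero.2 hP0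
  set Q : Polynomial E := ∏ ℓ : Fin (t+1), (X - C (α ℓ)) with hQ
  have hQdvd : Q ∣ P := Finset.prod_dvd_of_coprime
    ((pairwise_coprime_X_sub_C hα).set_pairwise _)
    (fun ℓ _ => dvd_iff_isRoot.2 (hroots ℓ))
  have hQmonic : Q.Monic := monic_prod_of_monic _ _ fun ℓ _ => monic_X_sub_C _
  have hQdeg : Q.natDegree = t + 1 := by
    rw [hQ, natDegree_prod _ _ (fun ℓ _ => X_sub_C_ne_zero _)]
    simp
  obtain ⟨R, hR⟩ := hQdvd
  have hRne : R ≠ 0 := right_ne_zero_of_mul (hR ▸ hP0)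
  have hRdeg : R.natDegree = 0 := by
    have := natDegree_mul hQmonic.ne_zero hRne
    rw [← hR, hPdeg, hQdeg] at this
    omega
  have hRC : R = C lc := by
    have h3 : lc = R.coeff 0 := by
      rw [hlcdef, hR, leadingCoeff_mul, hQmonic.leadingCoeff, one_mul,
        Polynomial.leadingCoeff, hRdeg]
    rw [eq_C_of_natDegree_eq_zero hRdeg, h3]
  have hPfact : P = C lc * Q := by rw [hR, hRC, mul_comm]
  have hdiv : ∀ ℓ, P /ₘ (X - C (α ℓ)) = C lc * ∏ k ∈ Finset.univ.erase ℓ, (X - C (α k)) := by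
    intro ℓ
    have h2 : P = (X - C (α ℓ)) * (C lc * ∏ k ∈ Finset.univ.erase ℓ, (X - C (α k))) := by
      rw [hPfact, hQ, ← Finset.mul_prod_erase _ _ (Finset.mem_univ ℓ)]; ring
    rw [h2, mul_divByMonic_cancel_left _ (monic_X_sub_C _)]
  -- Step 2: G = C lc * G0
  set G0 : Polynomial E := ∑ ℓ, C (w ℓ) * ∏ k ∈ Finset.univ.erase ℓ, (X - C (α k)) with hG0def
  have hGG0 : G = C lc * G0 := by
    rw [hG, hG0def, Finset.mul_sum]
    exact Finset.sum_congr rfl fun ℓ _ => by rw [hdiv ℓ]; ring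
  have hwne : ∀ ℓ, w ℓ ≠ 0 := by
    intro ℓ h
    obtain ⟨r, hr0, hrw⟩ := hw ℓ
    exact hr0 ((algebraMap F E).injective (by rw [hrw, h, map_zero]))
  -- Step 3: degree of G0 and G
  have hprodmonic : ∀ ℓ : Fin (t+1), (∏ k ∈ Finset.univ.erase ℓ, (X - C (α k))).Monic :=
    fun ℓ => monic_prod_of_monic _ _ fun k _ => monic_X_sub_C _
  have hproddeg : ∀ ℓ : Fin (t+1),
      (∏ k ∈ Finset.univ.erase ℓ, (X - C (α k))).natDegree = t := by
    intro ℓ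
    rw [natDegree_prod _ _ (fun k _ => X_sub_C_ne_zero _)]
    simp [Finset.card_erase_of_mem]
  have hcoeff : G0.coeff t = ∑ ℓ, w ℓ := by
    rw [hG0def, finset_sum_coeff]
    refine Finset.sum_congr rfl fun ℓ _ => ?_
    have h1 := (hprodmonic ℓ).coeff_natDegree
    rw [hproddeg ℓ] at h1
    rw [coeff_C_mul, h1, mul_one]
  have hG0deg : G0.natDegree = t := by
    refine le_antisymm (Polynomial.natDegree_sum_le_of_forall_le _ _ fun ℓ _ =>
      le_trans (natDegree_C_mul_le _ _) (le_of_eq (hproddeg ℓ)))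
      (le_natDegree_of_ne_zero (hcoeff ▸ hwsum))
  have hGdeg : G.natDegree = t := by rw [hGG0, natDegree_C_mul hlc, hG0deg]
  -- Step 4: evaluations
  have hG0eval : ∀ ℓ, G0.eval (α ℓ)
      = w ℓ * ∏ k ∈ Finset.univ.erase ℓ, (α ℓ - α k) := by
    intro ℓ
    have := goppa_fS_eval α w Finset.univ (Finset.mem_univ ℓ)
    simpa [hG0def] using this
  have hderiv : ∀ ℓ, (Polynomial.derivative P).eval (α ℓ)
      = lc * ∏ k ∈ Finset.univ.erase ℓ, (α ℓ - α k) := by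
    intro ℓ
    have h2 : P = (X - C (α ℓ)) * (C lc * ∏ k ∈ Finset.univ.erase ℓ, (X - C (α k))) := by
      rw [hPfact, hQ, ← Finset.mul_prod_erase _ _ (Finset.mem_univ ℓ)]; ring
    rw [h2, derivative_mul, derivative_X_sub_C]
    simp [eval_prod]
  have hprodne : ∀ ℓ : Fin (t+1), ∏ k ∈ Finset.univ.erase ℓ, (α ℓ - α k) ≠ 0 := by
    intro ℓ
    refine Finset.prod_ne_zero_iff.2 fun k hk => ?_
    exact sub_ne_zero.2 fun h => (Finset.mem_erase.1 hk).1 (hα h).symm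
  have hGeval : ∀ ℓ, G.eval (α ℓ) = w ℓ * (Polynomial.derivative P).eval (α ℓ) := by
    intro ℓ
    rw [hGG0, eval_mul, eval_C, hG0eval ℓ, hderiv ℓ]; ring
  refine ⟨hGdeg, fun ℓ => ⟨hGeval ℓ, by
    rw [hGeval ℓ, hderiv ℓ]
    exact mul_ne_zero (hwne ℓ) (mul_ne_zero hlc (hprodne ℓ))⟩, ?_⟩
  -- Step 5: minimum distance
  intro n β hβinj hβrange hGβ
  constructor
  · -- existence of a codeword of weight t + 1
    choose ι hι using fun ℓ => hβrange ℓ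
    have hιinj : Function.Injective ι := fun a b h => hα (by rw [← hι a, ← hι b, h])
    choose r hr0 hrw using hw
    set c : Fin n → F := fun i => if h : ∃ ℓ, ι ℓ = i then r h.choose else 0 with hc
    have hcι : ∀ k, c (ι k) = r k := by
      intro k
      have hex : ∃ ℓ, ι ℓ = ι k := ⟨k, rfl⟩
      show (if h : ∃ ℓ, ι ℓ = ι k then r h.choose else 0) = r k
      rw [dif_pos hex]
      exact congrArg r (hιinj hex.choose_spec)
    have hcz : ∀ i, (¬ ∃ ℓ, ι ℓ = i) → c i = 0 := fun i hi => by
      show (if h : ∃ ℓ, ι ℓ = i then r h.choose else 0) = 0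
      rw [dif_neg hi]
    set T : Finset (Fin n) := Finset.image ι Finset.univ with hT
    have hmemT : ∀ i, i ∈ T ↔ ∃ ℓ, ι ℓ = i := by simp [hT]
    have hsupp : ∀ i, c i ≠ 0 ↔ i ∈ T := by
      intro i
      constructor
      · intro h
        by_contra hiT
        exact h (hcz i (fun hex => hiT ((hmemT i).2 hex)))
      · rintro hiT
        obtain ⟨ℓ, rfl⟩ := (hmemT i).1 hiT
        rw [hcι ℓ]; exact hr0 ℓ
    refine ⟨c, ?_, ?_, ?_⟩
    · -- c is a codeword
      show G ∣ _
      rw [goppa_support_factor β (fun i => algebraMap F E (c i)) T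
        (fun i hi => by simp only [hcz i (fun hex => hi ((hmemT i).2 hex)), map_zero])]
      have hfT : (∑ i ∈ T, C (algebraMap F E (c i)) * ∏ j ∈ T.erase i, (X - C (β j))) = G0 := by
        rw [hT, Finset.sum_image (fun a _ b _ h => hιinj h), hG0def]
        refine Finset.sum_congr rfl fun ℓ _ => ?_
        congr 1
        · rw [hcι ℓ, hrw ℓ]
        · rw [← Finset.image_erase hιinj, Finset.prod_image
            (fun a _ b _ h => hιinj h)]
          exact Finset.prod_congr rfl fun k _ => by rw [hι k]
      rw [hfT]
      refine ⟨C lc⁻¹ * ∏ j ∈ Tᶜ, (X - C (β j)), ?_⟩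
      rw [hGG0]
      rw [mul_comm (C lc) G0]
      rw [← mul_assoc, mul_assoc _ (C lc), ← C_mul, mul_inv_cancel₀ hlc, C_1, mul_one]
      ring
    · -- c ≠ 0
      intro h0
      have := hcι 0
      rw [show c (ι 0) = 0 from by rw [h0]; rfl] at this
      exact hr0 0 this.symm
    · -- hammingNorm c = t + 1
      have hset : ({i | c i ≠ 0} : Finset (Fin n)) = T := by
        ext i
        simp only [Finset.mem_filter, Finset.mem_univ, true_and]
        exact hsupp i
      rw [hammingNorm, hset, hT, Finset.card_image_of_injective _ hιinj,
        Finset.card_univ, Fintype.card_fin]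
  · -- lower bound
    intro c hcmem hcne
    have hc' : (fun i => algebraMap F E (c i)) ≠ 0 := by
      intro h0
      refine hcne (funext fun i => ?_)
      have := congrFun h0 i
      exact (algebraMap F E).injective (by simpa using this)
    have := goppa_min_dist_lower β hβinj G hGdeg hGβ _ hc' hcmem
    refine le_trans this (le_of_eq ?_)
    rw [hammingNorm]
    congr 1
    ext i
    simp only [Finset.mem_filter, Finset.mem_univ, true_and]
    exact ⟨fun h h0 => h (by rw [h0, map_zero]), fun h h0 =>
      h ((algebraMap F E).injective (by simpa using h0))⟩
end

section
/- Let F be a finite field, let t ≥ 1, and let M(X) = X^t + a_{t−1}X^{t−1} + ⋯ + a_1 X + a_0 ∈ F[X] be a monic polynomial with a_0 ≠ 0, and let w ∈ F^*. Then the following are equivalent: (i) X(X − 1)·M'(X) ≡ w (mod M(X)); (ii) there exists b ∈ F such that (writing a_t = 1) (t − k + 1)·a_{k−1} + (k + b)·a_k = 0 for all 2 ≤ k ≤ t, t·a_0 + (b + 1)·a_1 = 0, and w = −b·a_0. -/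
open Polynomial

/-- coefficient criterion for the congruence
`X(X-1)M'(X) ≡ w (mod M(X))`. Let `M = X^t + a_{t-1}X^{t-1} + ⋯ + a_0 ∈ F[X]` be
monic with `a_0 ≠ 0` and `w ∈ F^*`. Then `M ∣ X(X-1)M'(X) - w` iff there is `b ∈ F`
with `(t-k+1)a_{k-1} + (k+b)a_k = 0` for `2 ≤ k ≤ t`, `t·a_0 + (b+1)a_1 = 0`, and
`w = -b·a_0`. -/
theorem congruence_coefficient_criterion
    (F : Type) [Field F] [Fintype F] (t : ℕ) (ht : 1 ≤ t)
    (M : Polynomial F) (hmonic : M.Monic) (hdeg : M.natDegree = t)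
    (ha0 : M.coeff 0 ≠ 0) (w : F) (hw : w ≠ 0) :
    (M ∣ (X * (X - 1) * Polynomial.derivative M - C w)) ↔
      ∃ b : F,
        (∀ k : ℕ, 2 ≤ k → k ≤ t →
          ((t - k + 1 : ℕ) : F) * M.coeff (k - 1) + ((k : F) + b) * M.coeff k = 0) ∧
        (t : F) * M.coeff 0 + (b + 1) * M.coeff 1 = 0 ∧
        w = -b * M.coeff 0 := by
  have hAt : M.coeff t = 1 := hdeg ▸ hmonic.coeff_natDegree
  have hAbig : ∀ k, t < k → M.coeff k = 0 := fun k hk =>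
    coeff_eq_zero_of_natDegree_lt (by omega)
  -- coefficients of the LHS polynomial N
  have hN0 : (X * (X - 1) * derivative M - C w).coeff 0 = -w := by
    simp [coeff_sub, mul_coeff_zero]
  have hre : X * (X - 1) * derivative M - C w
      = X * (X * derivative M) - X * derivative M - C w := by ring
  have hN1 : (X * (X - 1) * derivative M - C w).coeff 1 = - M.coeff 1 := by
    rw [hre]; simp [coeff_X_mul, coeff_derivative, coeff_one]
  have hNn : ∀ n : ℕ, (X * (X - 1) * derivative M - C w).coeff (n + 2)
      = ((n:F)+1) * M.coeff (n+1) - ((n:F)+2) * M.coeff (n+2) := by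
    intro n; rw [hre]; simp [coeff_X_mul, coeff_derivative]; ring
  -- coefficients of M * (C c * X + C b)
  have hP0 : ∀ c b : F, (M * (C c * X + C b)).coeff 0 = b * M.coeff 0 := by
    intro c b
    have h : M * (C c * X + C b) = X * (C c * M) + C b * M := by ring
    rw [h]; simp [mul_coeff_zero]
  have hPn : ∀ c b : F, ∀ n : ℕ,
      (M * (C c * X + C b)).coeff (n+1) = c * M.coeff n + b * M.coeff (n+1) := by
    intro c b n
    have h : M * (C c * X + C b) = X * (C c * M) + C b * M := by ring
    rw [h]; simp [coeff_X_mul, coeff_C_mul]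
  constructor
  · rintro ⟨Q, hQ⟩
    have hMne : M ≠ 0 := hmonic.ne_zero
    have hNne : X * (X - 1) * derivative M - C w ≠ 0 := by
      intro h
      apply hw
      have := congrArg (fun p => Polynomial.coeff p 0) h
      rw [hN0] at this
      simpa using this
    have hQne : Q ≠ 0 := by rintro rfl; rw [mul_zero] at hQ; exact hNne hQ
    have hdegN : (X * (X - 1) * derivative M - C w).natDegree ≤ t + 1 := by
      refine le_trans (natDegree_sub_le _ _) ?_
      simp only [natDegree_C, max_le_iff]
      refine ⟨?_, by omega⟩
      refine le_trans natDegree_mul_le ?_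
      have h1 : (X * (X - 1) : F[X]).natDegree ≤ 2 := by
        refine le_trans natDegree_mul_le ?_
        have : ((X : F[X]) - 1) = X - C 1 := by simp
        simp [this, natDegree_X_sub_C]
      have h2 : (derivative M).natDegree ≤ t - 1 := by
        simpa [hdeg] using natDegree_derivative_le M
      omega
    have hQdeg : Q.natDegree ≤ 1 := by
      have h := natDegree_mul hMne hQne
      rw [← hQ, hdeg] at h
      omega
    have hQeq := eq_X_add_C_of_natDegree_le_one hQdeg
    rw [hQeq] at hQ
    set q1 := Q.coeff 1 with hq1def
    set b := Q.coeff 0 with hbdef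
    have hco : ∀ n : ℕ, (X * (X - 1) * derivative M - C w).coeff n
        = (M * (C q1 * X + C b)).coeff n := fun n => by rw [hQ]
    -- q1 = t
    have hq1 : q1 = (t : F) := by
      have h := hco (t + 1)
      obtain ⟨m, rfl⟩ : ∃ m, t = m + 1 := ⟨t - 1, by omega⟩
      rw [hNn m, hPn q1 b (m+1)] at h
      rw [hAt, hAbig (m+1+1) (by omega)] at h
      push_cast at h ⊢
      linear_combination -h
    refine ⟨b, ?_, ?_, ?_⟩
    · intro k h2k hkt
      have h := hco k
      obtain ⟨m, rfl⟩ : ∃ m, k = m + 2 := ⟨k - 2, by omega⟩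
      have hkm : m + 2 - 1 = m + 1 := rfl
      rw [hNn m] at h
      rw [show m + 2 = m + 1 + 1 from rfl, hPn q1 b (m+1), hq1] at h
      have hc1 : ((t - (m+2) + 1 : ℕ) : F) = (t : F) - (m : F) - 1 := by
        have hn : (t - (m+2) + 1) + (m + 1) = t := by omega
        have hcc := congrArg (Nat.cast : ℕ → F) hn
        push_cast at hcc ⊢
        linear_combination hcc
      rw [hkm, hc1]
      push_cast
      linear_combination -h
    · have h := hco 1
      rw [hN1, hPn q1 b 0, hq1] at h
      linear_combination -h
    · have h := hco 0
      rw [hN0, hP0 q1 b] at h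
      linear_combination -h
  · rintro ⟨b, h1, h2, h3⟩
    refine ⟨C (t:F) * X + C b, ?_⟩
    ext n
    match n with
    | 0 => rw [hN0, hP0]; linear_combination -h3
    | 1 => rw [hN1, hPn _ _ 0]; linear_combination -h2
    | (m+2) =>
      rw [hNn m, hPn _ _ (m+1)]
      rcases lt_trichotomy (m+2) (t+1) with hlt | heq | hgt
      · have h := h1 (m+2) (by omega) (by omega)
        have hkm : m + 2 - 1 = m + 1 := rfl
        have hc1 : ((t - (m+2) + 1 : ℕ) : F) = (t : F) - (m : F) - 1 := by
          have hn : (t - (m+2) + 1) + (m + 1) = t := by omega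
          have hcc := congrArg (Nat.cast : ℕ → F) hn
          push_cast at hcc ⊢
          linear_combination hcc
        rw [hkm, hc1] at h
        push_cast at h
        linear_combination -h
      · have hm1 : m + 1 = t := by omega
        have e1 : M.coeff (m+1) = 1 := by rw [hm1, hAt]
        have e2 : M.coeff (m+2) = 0 := hAbig _ (by omega)
        have e3 : (m : F) + 1 = (t : F) := by
          have hcc := congrArg (Nat.cast : ℕ → F) hm1
          push_cast at hcc
          linear_combination hcc
        rw [e1, e2, e3]; ring
      · rw [hAbig (m+1) (by omega), hAbig (m+2) (by omega)]; ring
end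

section
/- Let q be a prime power, m ≥ 2, and let r be a positive divisor of q − 1. Set t = r·(q^m − 1)/(q − 1). For γ ∈ E, define F_γ(X) = (X + γ)^{t+1} − (X + γ) ∈ E[X]. Then F_γ has exactly t + 1 distinct roots in E, and for every root α of F_γ the derivative value F_γ'(α) lies in the image of F^* in E under the algebra map. -/
open Polynomial

/-! The roots of `F_γ` are the `x` with `x + γ = 0` or `(x + γ) ^ t = 1`. Since `t` divides
`q ^ m - 1 = |Eˣ|` and `Eˣ` is cyclic, `E` contains exactly `t` such `t`-th roots of unity, and
`t` is prime to the characteristic. At `x + γ = 0` the derivative `(t + 1)(x + γ) ^ t - 1` is `-1`,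
at the other roots it is `t`; both are nonzero images of elements of `F`. -/

namespace FiniteField

variable {K : Type*} [Field K] [Fintype K] {n : ℕ}

theorem pos_of_dvd_card_sub_one (hn : n ∣ Fintype.card K - 1) : 0 < n :=
  Nat.pos_of_dvd_of_pos hn (Nat.sub_pos_of_lt Fintype.one_lt_card)

theorem exists_isPrimitiveRoot_of_dvd_card_sub_one (hn : n ∣ Fintype.card K - 1) :
    ∃ ζ : K, IsPrimitiveRoot ζ n := by
  obtain ⟨g, hg⟩ := IsCyclic.exists_ofOrder_eq_natCard (α := Kˣ)
  have hgen : IsPrimitiveRoot (g : K) (Fintype.card K - 1) := by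
    rw [IsPrimitiveRoot.coe_units_iff, IsPrimitiveRoot.iff_orderOf, hg, Nat.card_units,
      Nat.card_eq_fintype_card]
  obtain ⟨d, hd⟩ := hn
  exact ⟨_, hgen.pow (Nat.sub_pos_of_lt Fintype.one_lt_card) (hd.trans (mul_comm n d))⟩

theorem natCast_ne_zero_of_dvd_card_sub_one (hn : n ∣ Fintype.card K - 1) : (n : K) ≠ 0 := by
  obtain ⟨d, hd⟩ := hn
  -- casting `|K| - 1 = n * d` into `K` gives `n * d = -1`
  have hnd : (n : K) * d = -1 := by
    rw [← Nat.cast_mul, ← hd, Nat.cast_sub Fintype.card_pos, cast_card_eq_zero, Nat.cast_one,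
      zero_sub]
  exact left_ne_zero_of_mul (hnd ▸ neg_ne_zero.2 one_ne_zero)

end FiniteField

theorem pow_succ_eq_self_iff {M₀ : Type*} [MonoidWithZero M₀] [IsLeftCancelMulZero M₀] {n : ℕ}
    {y : M₀} : y ^ (n + 1) = y ↔ y = 0 ∨ y ^ n = 1 := by
  rcases eq_or_ne y 0 with rfl | hy
  · simp
  · rw [pow_succ', mul_eq_left₀ hy]
    simp [hy]

section ShiftedPowSubSelf

variable {R : Type*} [CommRing R] {n : ℕ} (γ : R)

theorem eval_derivative_add_C_pow_succ_sub (x : R) :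
    (derivative ((X + C γ) ^ (n + 1) - (X + C γ))).eval x = (n + 1) * (x + γ) ^ n - 1 := by
  simp [derivative_pow]

variable [IsDomain R]

theorem eval_add_C_pow_succ_sub_eq_zero_iff {x : R} :
    ((X + C γ) ^ (n + 1) - (X + C γ)).eval x = 0 ↔ x + γ = 0 ∨ (x + γ) ^ n = 1 := by
  simp [sub_eq_zero, pow_succ_eq_self_iff]

theorem ncard_setOf_eval_add_C_pow_succ_sub_eq_zero (hn : n ≠ 0) :
    {x : R | ((X + C γ) ^ (n + 1) - (X + C γ)).eval x = 0}.ncard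
      = (nthRootsFinset n (1 : R)).card + 1 := by
  have hroots : {x : R | ((X + C γ) ^ (n + 1) - (X + C γ)).eval x = 0}
      = (· - γ) '' insert 0 ↑(nthRootsFinset n (1 : R)) := by
    ext x
    simp only [Set.mem_ofPred_eq, eval_add_C_pow_succ_sub_eq_zero_iff, Set.mem_image,
      Set.mem_insert_iff, Finset.mem_coe, mem_nthRootsFinset (Nat.pos_of_ne_zero hn)]
    exact ⟨fun h ↦ ⟨x + γ, h, add_sub_cancel_right x γ⟩, by rintro ⟨y, hy, rfl⟩; simpa using hy⟩
  have h0 : (0 : R) ∉ nthRootsFinset n (1 : R) := by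
    simp [mem_nthRootsFinset (Nat.pos_of_ne_zero hn), zero_pow hn]
  rw [hroots, Set.ncard_image_of_injective _ sub_left_injective, Set.ncard_insert_of_notMem h0,
    Set.ncard_coe_finset]

end ShiftedPowSubSelf

theorem auxiliary_polynomial_roots_general
    (q m r t : ℕ)
    (hr : 0 < r) (hrq : r ∣ q - 1) (ht : t * (q - 1) = r * (q ^ m - 1))
    (F E : Type) [Field F] [Field E] [Fintype E] [Algebra F E]
    (hE : Fintype.card E = q ^ m)
    (γ : E) :
    {x : E | ((X + C γ) ^ (t + 1) - (X + C γ) : Polynomial E).eval x = 0}.ncard = t + 1 ∧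
    ∀ x : E, ((X + C γ) ^ (t + 1) - (X + C γ) : Polynomial E).eval x = 0 →
      ∃ a : F, a ≠ 0 ∧ algebraMap F E a =
        (Polynomial.derivative ((X + C γ) ^ (t + 1) - (X + C γ) : Polynomial E)).eval x := by
  have htE : t ∣ Fintype.card E - 1 := by
    obtain ⟨s, hs⟩ := hrq
    exact hE ▸ ⟨s, Nat.eq_of_mul_eq_mul_left hr (by rw [← ht, hs]; ring)⟩
  have ht0 : t ≠ 0 := (FiniteField.pos_of_dvd_card_sub_one htE).ne'
  obtain ⟨ζ, hζ⟩ := FiniteField.exists_isPrimitiveRoot_of_dvd_card_sub_one htE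
  refine ⟨by rw [ncard_setOf_eval_add_C_pow_succ_sub_eq_zero γ ht0, hζ.card_nthRootsFinset],
    fun x hx ↦ ?_⟩
  rw [eval_derivative_add_C_pow_succ_sub]
  rcases (eval_add_C_pow_succ_sub_eq_zero_iff γ).1 hx with hzero | hunit
  · exact ⟨-1, neg_ne_zero.2 one_ne_zero, by simp [hzero, ht0]⟩
  · refine ⟨t, fun htF ↦ FiniteField.natCast_ne_zero_of_dvd_card_sub_one htE ?_, by simp [hunit]⟩
    simpa using congrArg (algebraMap F E) htF

/-- Lemma: the auxiliary polynomial `F_γ`. With `m ≥ 2`, `r ∣ q - 1`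
and `t = r(q^m - 1)/(q - 1)`, for any `γ ∈ E` the polynomial
`F_γ(X) = (X + γ)^{t+1} - (X + γ)` has exactly `t + 1` distinct roots in `E`, and at
every root the value of its derivative lies in the image of `F^*` under the algebra
map. -/
theorem auxiliary_polynomial_roots
    (q m r t : ℕ) (hq : IsPrimePow q) (hm : 2 ≤ m)
    (hr : 0 < r) (hrq : r ∣ q - 1) (ht : t * (q - 1) = r * (q ^ m - 1))
    (F E : Type) [Field F] [Fintype F] [Field E] [Fintype E] [Algebra F E]
    (hF : Fintype.card F = q) (hE : Fintype.card E = q ^ m)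
    (γ : E) :
    {x : E | ((X + C γ) ^ (t + 1) - (X + C γ) : Polynomial E).eval x = 0}.ncard = t + 1 ∧
    ∀ x : E, ((X + C γ) ^ (t + 1) - (X + C γ) : Polynomial E).eval x = 0 →
      ∃ a : F, a ≠ 0 ∧ algebraMap F E a =
        (Polynomial.derivative ((X + C γ) ^ (t + 1) - (X + C γ) : Polynomial E)).eval x :=
  auxiliary_polynomial_roots_general q m r t hr hrq ht F E hE γ
end

section
/- Let q be a prime power and m ≥ 2. Let g(X) ∈ E[X] be a polynomial of degree r > 1 with no roots in E, where r divides q − 1, and set G(X) = g(X)^{(q^m−1)/(q−1)} (the norm polynomial N_{E/F}(g)). Take the support set L = E (all q^m elements of E, on which G never vanishes). Then the wild Goppa code Γ_q(L, G) has minimum distance exactly d = r·(q^m − 1)/(q − 1) + 1. -/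
/-! The lower bound is the classical one for Goppa codes: for a codeword `c` with support `T`,
`∑ cᵢ ∏_{j ≠ i} (X - αⱼ)` factors as `∏_{j ∉ T} (X - αⱼ)` times a nonzero polynomial of degree
`< |T|`. As `G` has no roots in `E`, it is coprime to the first factor, so it divides the second
and `deg G < |T|`.

For the upper bound let `K = r s`, which divides `q^m - 1` because `r ∣ q - 1`, and interpolate
`G = g^s` on `T = {0} ∪ μ_K`, whose nodal polynomial is `X^{K+1} - X`. The coefficients
`cₓ = G(x) / (X^{K+1} - X)'(x)` are `-G(0)` and `G(x) / K`, and they lie in `F` because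
`g(x)^s` is the norm `N_{E/F}(g(x))`; the resulting codeword has numerator exactly `G`. -/

open Polynomial

open Lagrange Finset

section GoppaNumerator

variable {ι R : Type*} [DecidableEq ι] [CommRing R]

/-- The numerator of `∑_{i ∈ s} cᵢ / (X - vᵢ)` over the denominator `nodal s v`. -/
noncomputable def goppaNumerator (s : Finset ι) (v c : ι → R) : R[X] :=
  ∑ i ∈ s, C (c i) * nodal (s.erase i) v

variable {s t : Finset ι} {v c : ι → R}

theorem eval_goppaNumerator_of_mem {i : ι} (hi : i ∈ s) :
    (goppaNumerator s v c).eval (v i) = c i * (nodal (s.erase i) v).eval (v i) := by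
  rw [goppaNumerator, eval_finsetSum, sum_eq_single_of_mem i hi]
  · simp only [eval_mul, eval_C]
  · intro j _ hji
    rw [eval_mul, eval_nodal_at_node (mem_erase.mpr ⟨hji.symm, hi⟩), mul_zero]

theorem degree_goppaNumerator_lt [Nontrivial R] : (goppaNumerator s v c).degree < #s := by
  refine (degree_sum_le _ _).trans_lt <| (Finset.sup_lt_iff (WithBot.bot_lt_coe _)).mpr ?_
  intro i hi
  calc (C (c i) * nodal (s.erase i) v).degree
      ≤ (nodal (s.erase i) v).degree := by rw [← smul_eq_C_mul]; exact degree_smul_le _ _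
    _ < #s := by
      rw [degree_nodal, card_erase_of_mem hi]
      exact_mod_cast Nat.sub_lt (card_pos.mpr ⟨i, hi⟩) one_pos

theorem goppaNumerator_eq_nodal_sdiff_mul (hts : t ⊆ s) (hc : ∀ i ∈ s \ t, c i = 0) :
    goppaNumerator s v c = nodal (s \ t) v * goppaNumerator t v c := by
  rw [goppaNumerator, ← sum_subset hts fun i hi hit => by rw [hc i (mem_sdiff.mpr ⟨hi, hit⟩),
    C_0, zero_mul], goppaNumerator, mul_sum]
  refine sum_congr rfl fun i hi => ?_
  have hsdiff : s.erase i \ t.erase i = s \ t := by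
    ext j
    by_cases hji : j = i <;> simp_all
  rw [nodal, nodal, nodal, ← prod_sdiff (erase_subset_erase i hts), hsdiff]
  ring

theorem goppaNumerator_ne_zero [IsDomain R] (hv : Set.InjOn v s) {i : ι} (hi : i ∈ s)
    (hc : c i ≠ 0) :
    goppaNumerator s v c ≠ 0 := by
  refine fun h => mul_ne_zero hc (eval_nodal_not_at_node fun j hj => ?_) <|
    (eval_goppaNumerator_of_mem hi).symm.trans (by rw [h, eval_zero])
  exact fun hij => (mem_erase.mp hj).1 (hv (mem_of_mem_erase hj) hi hij.symm)

theorem goppaNumerator_eq_of_eval_eq [IsDomain R] {f : R[X]} (hv : Set.InjOn v s)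
    (hf : f.degree < #s)
    (heval : ∀ i ∈ s, c i * (nodal (s.erase i) v).eval (v i) = f.eval (v i)) :
    goppaNumerator s v c = f :=
  eq_of_degrees_lt_of_eval_index_eq s hv degree_goppaNumerator_lt hf fun i hi => by
    rw [eval_goppaNumerator_of_mem hi, heval i hi]

end GoppaNumerator

section GoppaCode

variable {F E : Type} [Field F] [Field E] [Algebra F E] {n : ℕ} {α : Fin n → E} {G : E[X]}

theorem mem_goppaCode_iff {c : Fin n → F} :
    c ∈ goppaCode F α G ↔ G ∣ goppaNumerator univ α (algebraMap F E ∘ c) :=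
  Iff.rfl

theorem natDegree_lt_hammingNorm_of_mem_goppaCode [DecidableEq F] (hα : Function.Injective α)
    (hG : ∀ i, G.eval (α i) ≠ 0) {c : Fin n → F} (hc : c ∈ goppaCode F α G) (hc0 : c ≠ 0) :
    G.natDegree < hammingNorm c := by
  set t : Finset (Fin n) := {i | c i ≠ 0}
  obtain ⟨i, hi⟩ := Function.ne_iff.mp hc0
  have hsplit := goppaNumerator_eq_nodal_sdiff_mul (v := α) (c := algebraMap F E ∘ c)
    (subset_univ t) fun j hj => by simp_all [t]
  have hcop : IsCoprime G (nodal (univ \ t) α) := IsCoprime.prod_right fun j _ =>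
    ((irreducible_X_sub_C _).coprime_iff_not_dvd.mpr fun h => hG j (dvd_iff_isRoot.mp h)).symm
  have hdvd : G ∣ goppaNumerator t α (algebraMap F E ∘ c) :=
    hcop.dvd_of_dvd_mul_left (hsplit ▸ mem_goppaCode_iff.mp hc)
  have hne : goppaNumerator t α (algebraMap F E ∘ c) ≠ 0 :=
    goppaNumerator_ne_zero hα.injOn (by simpa [t] using hi) (by simpa using hi)
  calc G.natDegree ≤ _ := natDegree_le_of_dvd hdvd hne
    _ < #t := (natDegree_lt_iff_degree_lt hne).mpr degree_goppaNumerator_lt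

theorem exists_mem_goppaCode_hammingNorm_eq [DecidableEq F] (hα : Function.Injective α)
    (t : Finset (Fin n)) (hG : G.degree < #t)
    (hval : ∀ i ∈ t, G.eval (α i) ≠ 0 ∧
      G.eval (α i) / (derivative (nodal t α)).eval (α i) ∈ (algebraMap F E).fieldRange) :
    ∃ c ∈ goppaCode F α G, hammingNorm c = #t := by
  choose! a ha using fun i hi => (hval i hi).2
  classical
  set c : Fin n → F := fun i => if i ∈ t then a i else 0
  have hD : ∀ i ∈ t, (derivative (nodal t α)).eval (α i) ≠ 0 := fun i hi => by
    rw [eval_nodal_derivative_eval_node_eq hi]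
    exact eval_nodal_not_at_node fun j hj h => (mem_erase.mp hj).1 (hα h).symm
  have hct : ∀ i, c i ≠ 0 ↔ i ∈ t := fun i => by
    by_cases hi : i ∈ t
    · simp only [c, hi, if_true, iff_true]
      intro h
      have h0 := ha i hi
      rw [h, map_zero, eq_comm, div_eq_zero_iff] at h0
      exact (hval i hi).1 (h0.resolve_right (hD i hi))
    · simp [c, hi]
  have hnum : goppaNumerator t α (algebraMap F E ∘ c) = G :=
    goppaNumerator_eq_of_eval_eq hα.injOn hG fun i hi => by
      simp only [Function.comp_apply, c, if_pos hi, ha i hi,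
        ← eval_nodal_derivative_eval_node_eq hi]
      exact div_mul_cancel₀ _ (hD i hi)
  refine ⟨c, ?_, congrArg card (by ext i; simpa using hct i)⟩
  rw [mem_goppaCode_iff, goppaNumerator_eq_nodal_sdiff_mul (subset_univ t), hnum]
  · exact dvd_mul_left _ _
  · intro i hi
    simp [c, (mem_sdiff.mp hi).2]

end GoppaCode

theorem FiniteField.exists_isPrimitiveRoot {K : Type*} [Field K] [Fintype K] {k : ℕ}
    (hk : k ∣ Fintype.card K - 1) : ∃ ζ : K, IsPrimitiveRoot ζ k := by
  classical
  obtain ⟨u, hu⟩ := IsCyclic.exists_ofOrder_eq_natCard (α := Kˣ)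
  rw [Nat.card_eq_fintype_card, Fintype.card_units] at hu
  refine ⟨(u ^ (orderOf u / k) : Kˣ), IsPrimitiveRoot.coe_units_iff.mpr ?_⟩
  simpa only [orderOf_pow_orderOf_div (orderOf_pos u).ne' (hu ▸ hk)] using
    IsPrimitiveRoot.orderOf (u ^ (orderOf u / k))

theorem FiniteField.pow_mem_fieldRange_algebraMap {F E : Type*} [Field F] [Fintype F] [Field E]
    [Fintype E] [Algebra F E] {s : ℕ} (hs : s * (Fintype.card F - 1) = Fintype.card E - 1)
    (x : E) : x ^ s ∈ (algebraMap F E).fieldRange := by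
  refine ⟨Algebra.norm F x, ?_⟩
  rw [FiniteField.algebraMap_norm_eq_pow, Nat.card_eq_fintype_card, Nat.card_eq_fintype_card,
    ← hs, Nat.mul_div_cancel _ (Nat.sub_pos_of_lt Fintype.one_lt_card)]

section RootsOfUnity

variable {R : Type*} [CommRing R] [IsDomain R] [DecidableEq R] {ζ : R} {k : ℕ}

theorem nodal_insert_zero_nthRootsFinset (hk : 0 < k) (hζ : IsPrimitiveRoot ζ k) :
    nodal (insert 0 (nthRootsFinset k (1 : R))) id = X ^ (k + 1) - X := by
  have h0 : (0 : R) ∉ nthRootsFinset k (1 : R) := by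
    simp [mem_nthRootsFinset hk, zero_pow hk.ne']
  rw [nodal_insert_eq_nodal h0, nodal_eq, id, C_0, sub_zero]
  simp only [id, ← X_pow_sub_one_eq_prod hk hζ]
  ring

theorem eval_derivative_nodal_insert_zero_nthRootsFinset (hk : 0 < k) (hζ : IsPrimitiveRoot ζ k)
    {x : R} (hx : x ∈ insert 0 (nthRootsFinset k (1 : R))) :
    (derivative (nodal (insert 0 (nthRootsFinset k (1 : R))) id)).eval x =
      if x = 0 then -1 else (k : R) := by
  rw [nodal_insert_zero_nthRootsFinset hk hζ]
  rcases mem_insert.mp hx with rfl | hx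
  · simp [zero_pow hk.ne']
  · have hx0 : x ≠ 0 := by rintro rfl; simp [mem_nthRootsFinset hk, zero_pow hk.ne'] at hx
    simp [hx0, (mem_nthRootsFinset hk _).mp hx]

end RootsOfUnity

theorem exists_mem_goppaCode_hammingNorm_eq_of_isPrimitiveRoot {F E : Type} [Field F] [Field E]
    [Algebra F E] [DecidableEq F] {n : ℕ} {α : Fin n → E} (hα : Function.Bijective α) {G : E[X]}
    {K : ℕ} (hK : 0 < K) {ζ : E} (hζ : IsPrimitiveRoot ζ K) (hGdeg : G.natDegree = K)
    (hG : ∀ x, G.eval x ≠ 0) (hGF : ∀ x, G.eval x ∈ (algebraMap F E).fieldRange) :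
    ∃ c ∈ goppaCode F α G, hammingNorm c = K + 1 := by
  classical
  set S := insert 0 (nthRootsFinset K (1 : E))
  set t := S.map (Equiv.ofBijective α hα).symm.toEmbedding
  have hnodal : nodal t α = nodal S id := by
    simp only [t, nodal, prod_map, Equiv.coe_toEmbedding, Equiv.ofBijective_apply_symm_apply, id]
  have hcard : #t = K + 1 := by
    rw [card_map, card_insert_of_notMem, hζ.card_nthRootsFinset]
    simp [mem_nthRootsFinset hK, zero_pow hK.ne']
  have hval : ∀ i ∈ t, G.eval (α i) / (derivative (nodal t α)).eval (α i) ∈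
      (algebraMap F E).fieldRange := fun i hi => by
    rw [hnodal, eval_derivative_nodal_insert_zero_nthRootsFinset hK hζ (x := α i)
      (mem_map_equiv.mp hi)]
    refine div_mem (hGF _) ?_
    split_ifs
    · exact neg_mem (one_mem _)
    · exact natCast_mem _ _
  have hdeg : G.degree < #t := by
    rw [degree_eq_natDegree fun h => hG 0 (by simp [h]), hGdeg, hcard]
    exact_mod_cast Nat.lt_succ_self K
  simpa only [hcard] using
    exists_mem_goppaCode_hammingNorm_eq hα.injective t hdeg fun i hi => ⟨hG _, hval i hi⟩

theorem wild_goppa_minDist_general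
    (q m r s : ℕ)
    (hrq : r ∣ q - 1) (hs : s * (q - 1) = q ^ m - 1)
    (F E : Type) [Field F] [Fintype F] [DecidableEq F] [Field E] [Fintype E] [Algebra F E]
    (hF : Fintype.card F = q) (hE : Fintype.card E = q ^ m)
    (g : Polynomial E) (hgdeg : g.natDegree = r)
    (hnoroot : ∀ x : E, g.eval x ≠ 0)
    (α : Fin (q ^ m) → E) (hα : Function.Bijective α) :
    hasMinDist (goppaCode F α (g ^ s)) (r * s + 1) := by
  have hG : ∀ x, (g ^ s).eval x ≠ 0 := fun x => by rw [eval_pow]; exact pow_ne_zero _ (hnoroot x)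
  have hdeg : (g ^ s).natDegree = r * s := by rw [natDegree_pow, hgdeg, mul_comm]
  refine ⟨?_, fun c hc hc0 =>
    hdeg ▸ natDegree_lt_hammingNorm_of_mem_goppaCode hα.injective (fun i => hG _) hc hc0⟩
  rw [← hE, ← hF] at hs
  have hK : r * s ∣ Fintype.card E - 1 := by
    rw [← hs, mul_comm s]; exact mul_dvd_mul_right (hF ▸ hrq) s
  have hK0 : 0 < r * s := Nat.pos_of_dvd_of_pos hK (Nat.sub_pos_of_lt Fintype.one_lt_card)
  obtain ⟨ζ, hζ⟩ := FiniteField.exists_isPrimitiveRoot hK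
  obtain ⟨c, hc, hwt⟩ := exists_mem_goppaCode_hammingNorm_eq_of_isPrimitiveRoot (F := F) hα hK0 hζ
    hdeg hG fun x => by rw [eval_pow]; exact FiniteField.pow_mem_fieldRange_algebraMap hs _
  exact ⟨c, hc, hammingNorm_ne_zero_iff.mp (by omega), hwt⟩

/-- Theorem: tightness of the improved bound for wild Goppa codes.
Let `g ∈ E[X]` have degree `r > 1` with `r ∣ q - 1` and no roots in `E`, and let
`G = g^{(q^m-1)/(q-1)}` be the norm polynomial. With support set `L = E`
(all `q^m` elements), the wild Goppa code `Γ_q(L, G)` has minimum distance exactly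
`r(q^m - 1)/(q - 1) + 1`. -/
theorem wild_goppa_minDist
    (q m r s : ℕ) (hq : IsPrimePow q) (hm : 2 ≤ m)
    (hr : 1 < r) (hrq : r ∣ q - 1) (hs : s * (q - 1) = q ^ m - 1)
    (F E : Type) [Field F] [Fintype F] [DecidableEq F] [Field E] [Fintype E] [Algebra F E]
    (hF : Fintype.card F = q) (hE : Fintype.card E = q ^ m)
    (g : Polynomial E) (hgdeg : g.natDegree = r) (hg0 : g ≠ 0)
    (hnoroot : ∀ x : E, g.eval x ≠ 0)
    (α : Fin (q ^ m) → E) (hα : Function.Bijective α) :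
    hasMinDist (goppaCode F α (g ^ s)) (r * s + 1) :=
  wild_goppa_minDist_general q m r s hrq hs F E hF hE g hgdeg hnoroot α hα
end

section
/- Let q be a power of an odd prime, and let m and t be positive integers with t dividing q^m − 1. Let A ∈ E^* be a t-th power in E^* (i.e., A = B^t for some B ∈ E^*). Set G(X) = X^t + A and L = {α ∈ E : G(α) ≠ 0}. Then the Goppa code Γ_q(L, G) has minimum distance exactly d = t + 1. -/
open Polynomial

lemma goppa_aux_coprime {E : Type} [Field E] {a : E} {G : Polynomial E} (h : G.eval a ≠ 0) :
    IsCoprime (X - C a : Polynomial E) G := by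
  obtain ⟨Q, hQ⟩ := X_sub_C_dvd_sub_C_eval (a := a) (p := G)
  have hC : (C (G.eval a)⁻¹ : Polynomial E) * C (G.eval a) = 1 := by
    rw [← C_mul, inv_mul_cancel₀ h, C_1]
  exact ⟨-(C (G.eval a)⁻¹ * Q), C (G.eval a)⁻¹, by linear_combination hC + C (G.eval a)⁻¹ * hQ⟩

lemma goppa_aux_factor {F E : Type} [Field F] [Field E] [Algebra F E] {n : ℕ}
    (α : Fin n → E) (c : Fin n → F) (S : Finset (Fin n))
    (hS : ∀ i, i ∉ S → c i = 0) :
    ∑ i : Fin n, C (algebraMap F E (c i)) * ∏ j ∈ Finset.univ.erase i, (X - C (α j)) =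
    (∏ j ∈ Finset.univ \ S, (X - C (α j))) *
      ∑ i ∈ S, C (algebraMap F E (c i)) * ∏ j ∈ S.erase i, (X - C (α j)) := by
  classical
  rw [Finset.mul_sum]
  rw [← Finset.sum_subset (Finset.subset_univ S)
      (fun i _ hi => by rw [hS i hi, map_zero, C_0, zero_mul])]
  refine Finset.sum_congr rfl fun i hi => ?_
  have hsub : S.erase i ⊆ Finset.univ.erase i :=
    Finset.erase_subset_erase i (Finset.subset_univ S)
  have hset : (Finset.univ.erase i) \ (S.erase i) = Finset.univ \ S := by
    ext j
    simp only [Finset.mem_sdiff, Finset.mem_erase, Finset.mem_univ, true_and, and_true]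
    constructor
    · rintro ⟨hj, h2⟩ hjS; exact h2 ⟨hj, hjS⟩
    · intro hjS
      exact ⟨fun hji => hjS (hji ▸ hi), fun h2 => hjS h2.2⟩
  rw [← Finset.prod_sdiff hsub, hset]
  ring

lemma goppa_aux_eval {F E : Type} [Field F] [Field E] [Algebra F E] {n : ℕ}
    (α : Fin n → E) (c : Fin n → F) (S : Finset (Fin n)) {i0 : Fin n} (hi0 : i0 ∈ S) :
    eval (α i0) (∑ i ∈ S, C (algebraMap F E (c i)) * ∏ j ∈ S.erase i, (X - C (α j)))
      = algebraMap F E (c i0) * ∏ j ∈ S.erase i0, (α i0 - α j) := by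
  classical
  rw [eval_finset_sum]
  rw [Finset.sum_eq_single_of_mem i0 hi0 (fun i hi hne => ?_)]
  · simp [eval_prod]
  · have hmem : i0 ∈ S.erase i := Finset.mem_erase.mpr ⟨fun h => hne h.symm, hi0⟩
    rw [eval_mul, eval_prod]
    rw [Finset.prod_eq_zero hmem (by simp), mul_zero]

lemma goppa_aux_deg {E : Type} [Field E] {ι : Type} [DecidableEq ι] (S : Finset ι)
    (a : ι → E) (v : ι → E) (k : ℕ) (hk : ∀ i ∈ S, (S.erase i).card ≤ k) :
    (∑ i ∈ S, C (a i) * ∏ j ∈ S.erase i, (X - C (v j))).natDegree ≤ k := by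
  refine Polynomial.natDegree_sum_le_of_forall_le S _ fun i hi => ?_
  refine le_trans natDegree_mul_le ?_
  rw [natDegree_C, zero_add]
  refine le_trans (natDegree_prod_le _ _) ?_
  refine le_trans (Finset.sum_le_card_nsmul _ _ 1
    (fun j _ => le_of_eq (natDegree_X_sub_C _))) ?_
  rw [smul_eq_mul, mul_one]
  exact hk i hi

lemma goppa_aux_roots {E : Type} [Field E] [DecidableEq E] {t : ℕ} (ht : 0 < t)
    {ζ : E} (hζ : IsPrimitiveRoot ζ t) {A B : E} (hB : B ≠ 0) (hA : A = B ^ t) :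
    ∃ R : Finset E, R.card = t ∧ (∀ x, x ∈ R ↔ x ^ t = A) ∧
      ∏ b ∈ R, (X - C b) = X ^ t - C A := by
  have hA0 : A ≠ 0 := hA ▸ pow_ne_zero t hB
  have hnodup : (nthRoots t A).Nodup := hζ.nthRoots_nodup hA0
  have hcard : Multiset.card (nthRoots t A) = t := by
    rw [hζ.card_nthRoots A, if_pos ⟨B, hA.symm⟩]
  refine ⟨(nthRoots t A).toFinset, ?_, ?_, ?_⟩
  · rw [Multiset.toFinset_card_of_nodup hnodup, hcard]
  · intro x; rw [Multiset.mem_toFinset, mem_nthRoots ht]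
  · have hmonic : (X ^ t - C A : Polynomial E).Monic := monic_X_pow_sub_C A ht.ne'
    have hcardroots : Multiset.card (X ^ t - C A : Polynomial E).roots
        = (X ^ t - C A : Polynomial E).natDegree := by
      rw [natDegree_X_pow_sub_C]; exact hcard
    have hprod := prod_multiset_X_sub_C_of_monic_of_roots_card_eq hmonic hcardroots
    rw [Finset.prod_eq_multiset_prod, Multiset.toFinset_val, Multiset.Nodup.dedup hnodup]
    exact hprod

/-- Theorem: `q`-ary Goppa codes with `G(X) = X^t + A`, `q` odd.
Let `q` be a power of an odd prime, `t ∣ q^m - 1`, and `A` a `t`-th power in `E^*`.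
With `G(X) = X^t + A` and support set `L = {α ∈ E : G(α) ≠ 0}`, the Goppa code
`Γ_q(L, G)` has minimum distance exactly `t + 1`. -/
theorem goppa_xt_plus_A_minDist
    (p e q m t : ℕ) (hp : p.Prime) (hodd : Odd p) (hq : q = p ^ e) (he : 0 < e)
    (hm : 0 < m) (ht : 0 < t) (htdvd : t ∣ q ^ m - 1)
    (F E : Type) [Field F] [Fintype F] [DecidableEq F] [Field E] [Fintype E] [Algebra F E]
    (hF : Fintype.card F = q) (hE : Fintype.card E = q ^ m)
    (A B : E) (hB : B ≠ 0) (hA : A = B ^ t)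
    (n : ℕ) (α : Fin n → E) (hα : Function.Injective α)
    (hrange : Set.range α = {x : E | (X ^ t + C A : Polynomial E).eval x ≠ 0}) :
    hasMinDist (goppaCode F α (X ^ t + C A : Polynomial E)) (t + 1) := by
  classical
  have hA0 : A ≠ 0 := hA ▸ pow_ne_zero t hB
  set G : Polynomial E := X ^ t + C A with hGdef
  have hGdeg : G.natDegree = t := natDegree_X_pow_add_C
  have hGeval0 : G.eval 0 = A := by simp [hGdef, zero_pow ht.ne']
  have hGne : G ≠ 0 := fun h => hA0 (by rw [← hGeval0, h, eval_zero])
  have hGevalR : ∀ b : E, b ^ t = A → G.eval b = 2 * A := by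
    intro b hb
    simp only [hGdef, eval_add, eval_pow, eval_X, eval_C, hb]
    ring
  -- cardinality facts
  have hp3 : 3 ≤ p := by
    have h2 := hp.two_le
    rcases hodd with ⟨k, hk⟩
    omega
  have hq3 : 3 ≤ q := le_trans hp3 (hq ▸ Nat.le_self_pow he.ne' p)
  have hqm3 : 3 ≤ q ^ m := le_trans hq3 (Nat.le_self_pow hm.ne' q)
  -- characteristic facts
  have htE : (t : E) ≠ 0 := by
    intro h0
    have h1 : ringChar E ∣ t := (CharP.cast_eq_zero_iff E (ringChar E) t).mp h0
    have h3 : ringChar E ∣ q ^ m := by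
      rw [← hE]
      exact (CharP.cast_eq_zero_iff E (ringChar E) _).mp (FiniteField.cast_card_eq_zero E)
    have h4 : ringChar E ∣ 1 := by
      have h5 := Nat.dvd_sub h3 (h1.trans htdvd)
      rwa [Nat.sub_sub_self (by omega)] at h5
    exact CharP.char_ne_one E (ringChar E) (Nat.dvd_one.mp h4)
  have h2E : (2 : E) ≠ 0 := by
    intro h0
    have h1 : ringChar E ∣ 2 := by
      rw [show ((2:E)) = ((2:ℕ):E) by norm_cast] at h0
      exact (CharP.cast_eq_zero_iff E (ringChar E) 2).mp h0
    have hoddE : Fintype.card E % 2 = 1 := by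
      rw [hE, hq, ← pow_mul, Nat.pow_mod]
      have : p % 2 = 1 := Nat.odd_iff.mp hodd
      rw [this, one_pow]
      omega
    rcases (Nat.prime_two.eq_one_or_self_of_dvd _ h1) with h | h
    · exact CharP.char_ne_one E (ringChar E) h
    · have := FiniteField.even_card_of_char_two (F := E) h
      omega
  have htF : (t : F) ≠ 0 := fun h =>
    htE (by rw [← map_natCast (algebraMap F E) t, h, map_zero])
  have h2F : (2 : F) ≠ 0 := fun h =>
    h2E (by rw [← map_ofNat (algebraMap F E) 2, h, map_zero])
  -- G does not vanish on the support
  have hLall : ∀ j, G.eval (α j) ≠ 0 := fun j => by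
    have hj : α j ∈ Set.range α := ⟨j, rfl⟩
    rw [hrange] at hj
    exact hj
  -- primitive t-th root of unity
  have hcardu : Nat.card Eˣ = q ^ m - 1 := by
    rw [Nat.card_eq_fintype_card, Fintype.card_units, hE]
  obtain ⟨g, hg⟩ := IsCyclic.exists_ofOrder_eq_natCard (α := Eˣ)
  have hgord : orderOf g = q ^ m - 1 := by rw [hg, hcardu]
  have htg : t ∣ orderOf g := hgord ▸ htdvd
  have hordζ : orderOf (g ^ (orderOf g / t)) = t :=
    orderOf_pow_orderOf_div (by rw [hgord]; omega) htg
  have hprim : IsPrimitiveRoot ((g ^ (orderOf g / t) : Eˣ) : E) t := by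
    refine IsPrimitiveRoot.coe_units_iff.mpr ?_
    have h := IsPrimitiveRoot.orderOf (g ^ (orderOf g / t))
    rwa [hordζ] at h
  obtain ⟨R, hcardR, hmemR, hprodR⟩ := goppa_aux_roots ht hprim hB hA
  have h0R : (0 : E) ∉ R := fun h =>
    hA0 (by rw [← (hmemR 0).mp h, zero_pow ht.ne'])
  set T : Finset E := insert (0 : E) R with hTdef
  have hcardT : T.card = t + 1 := by
    rw [hTdef, Finset.card_insert_of_notMem h0R, hcardR]
  have hTL : ∀ b ∈ T, G.eval b ≠ 0 := by
    intro b hb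
    rcases Finset.mem_insert.mp hb with rfl | hbR
    · rw [hGeval0]; exact hA0
    · rw [hGevalR b ((hmemR b).mp hbR)]
      exact mul_ne_zero h2E hA0
  have hTrange : ∀ b ∈ T, ∃ i, α i = b := by
    intro b hb
    have : b ∈ Set.range α := by rw [hrange]; exact hTL b hb
    exact this
  set S : Finset (Fin n) := Finset.univ.filter (fun i => α i ∈ T) with hSdef
  have hmemS : ∀ i, i ∈ S ↔ α i ∈ T := by
    intro i; rw [hSdef, Finset.mem_filter]; simp
  have himg : S.image α = T := by
    ext b
    simp only [Finset.mem_image]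
    constructor
    · rintro ⟨i, hi, rfl⟩; exact (hmemS i).mp hi
    · intro hb
      obtain ⟨i, hi⟩ := hTrange b hb
      exact ⟨i, (hmemS i).mpr (hi ▸ hb), hi⟩
  have hcardS : S.card = t + 1 := by
    rw [← hcardT, ← himg]
    exact (Finset.card_image_of_injective S hα).symm
  -- the codeword
  set u : F := 2 * (t : F)⁻¹ with hu
  have hu0 : u ≠ 0 := mul_ne_zero h2F (inv_ne_zero htF)
  set c : Fin n → F := fun i => if α i = 0 then -1 else if α i ∈ R then u else 0 with hcdef
  have hsupp : ∀ i, c i ≠ 0 ↔ i ∈ S := by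
    intro i
    rw [hmemS i, hTdef, Finset.mem_insert]
    by_cases h1 : α i = 0
    · simp [hcdef, h1]
    · by_cases h2 : α i ∈ R
      · simp [hcdef, h1, h2, hu0]
      · simp [hcdef, h1, h2]
  have hnormc : hammingNorm c = t + 1 := by
    rw [← hcardS]
    have h1 : ({i | c i ≠ 0} : Finset (Fin n)) = S := by
      ext i
      simp only [Finset.mem_filter, Finset.mem_univ, true_and]
      exact hsupp i
    rw [hammingNorm, h1]
  have hSne : S.Nonempty := Finset.card_pos.mp (by omega)
  have hc0 : c ≠ 0 := by
    obtain ⟨i, hi⟩ := hSne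
    exact fun h => ((hsupp i).mpr hi) (by rw [h]; rfl)
  -- the restricted sum equals G
  set gp : Polynomial E := ∑ i ∈ S, C (algebraMap F E (c i)) * ∏ j ∈ S.erase i, (X - C (α j))
    with hgp
  have hgpG : gp = G := by
    have hdeg1 : gp.natDegree ≤ t := goppa_aux_deg S _ α t (fun i hi => by
      rw [Finset.card_erase_of_mem hi, hcardS]; omega)
    have hdeg : (gp - G).natDegree < T.card := by
      rw [hcardT]
      have h2 := natDegree_sub_le gp G
      have h3 := le_trans h2 (max_le hdeg1 (le_of_eq hGdeg))
      omega
    have hev : ∀ b ∈ T, (gp - G).eval b = 0 := by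
      intro b hb
      obtain ⟨i0, hi0S, hi0⟩ : ∃ i0, i0 ∈ S ∧ α i0 = b := by
        have hb' : b ∈ S.image α := himg ▸ hb
        obtain ⟨i0, h1, h2⟩ := Finset.mem_image.mp hb'
        exact ⟨i0, h1, h2⟩
      subst hi0
      rw [eval_sub, sub_eq_zero, hgp, goppa_aux_eval α c S hi0S]
      have hprodim : ∏ j ∈ S.erase i0, (α i0 - α j) = ∏ x ∈ T.erase (α i0), (α i0 - x) := by
        rw [← himg, ← Finset.image_erase hα]
        exact (Finset.prod_image (fun x _ y _ h => hα h)).symm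
      rw [hprodim]
      rcases Finset.mem_insert.mp ((hmemS i0).mp hi0S) with h0 | hbR
      · -- the point 0
        have hcv : c i0 = -1 := by rw [hcdef]; simp [h0]
        have hTe : T.erase (α i0) = R := by rw [h0, hTdef, Finset.erase_insert h0R]
        have hPR : ∏ x ∈ R, (α i0 - x) = -A := by
          have h5 := congrArg (eval (α i0)) hprodR
          simp only [eval_prod, eval_sub, eval_X, eval_C, eval_pow] at h5
          rw [h0] at h5 ⊢
          rw [h5, zero_pow ht.ne', zero_sub]
        rw [hTe, hPR, hcv, h0, hGeval0, map_neg, map_one]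
        ring
      · -- a point of R
        have hb0 : α i0 ≠ 0 := fun h => h0R (h ▸ hbR)
        have hbt : (α i0) ^ t = A := (hmemR _).mp hbR
        have hcv : c i0 = u := by rw [hcdef]; simp [hb0, hbR]
        have hTe : T.erase (α i0) = insert 0 (R.erase (α i0)) := by
          rw [hTdef, Finset.erase_insert_of_ne (Ne.symm hb0)]
        have hkey : ∏ x ∈ R.erase (α i0), (α i0 - x) = (t : E) * (α i0) ^ (t - 1) := by
          have hsplit : (X ^ t - C A : Polynomial E)
              = (X - C (α i0)) * ∏ x ∈ R.erase (α i0), (X - C x) := by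
            rw [← hprodR]
            exact (Finset.mul_prod_erase R (fun b => X - C b) hbR).symm
          have hder := congrArg derivative hsplit
          rw [derivative_sub, derivative_X_pow, derivative_C, sub_zero, derivative_mul,
            derivative_sub, derivative_X, derivative_C, sub_zero, one_mul] at hder
          have hev2 := congrArg (eval (α i0)) hder
          simp only [eval_mul, eval_add, eval_sub, eval_X, eval_C, eval_pow, eval_prod,
            sub_self, zero_mul, mul_zero, add_zero] at hev2
          exact hev2.symm
        rw [hTe, Finset.prod_insert (fun h => h0R (Finset.mem_of_mem_erase h)), sub_zero,
          hkey, hcv, hGevalR _ hbt]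
        have hmap : algebraMap F E u = 2 * (t : E)⁻¹ := by
          rw [hu, map_mul, map_inv₀, map_natCast, map_ofNat]
        rw [hmap]
        have hpow : (α i0) * (α i0) ^ (t - 1) = (α i0) ^ t := by
          rw [← pow_succ']
          congr 1
          omega
        have hfin : 2 * (t : E)⁻¹ * ((α i0) * ((t : E) * (α i0) ^ (t - 1)))
            = 2 * ((α i0) * (α i0) ^ (t - 1)) := by
          field_simp
        rw [hfin, hpow, hbt]
    have h0 := eq_zero_of_natDegree_lt_card_of_eval_eq_zero' (gp - G) T hev hdeg
    exact sub_eq_zero.mp h0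
  -- membership of the codeword
  have hmem : c ∈ goppaCode F α G := by
    simp only [goppaCode, Set.mem_setOf_eq]
    rw [goppa_aux_factor α c S (fun i hi => by
      by_contra h; exact hi ((hsupp i).mp h))]
    rw [← hgp, hgpG]
    exact dvd_mul_left G _
  refine ⟨⟨c, hmem, hc0, hnormc⟩, ?_⟩
  -- lower bound
  intro d hd hd0
  simp only [goppaCode, Set.mem_setOf_eq] at hd
  set Sd : Finset (Fin n) := Finset.univ.filter (fun i => d i ≠ 0) with hSd
  have hnormd : hammingNorm d = Sd.card := by
    rw [hammingNorm, hSd]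
  obtain ⟨i0, hi0⟩ := Function.ne_iff.mp hd0
  simp only [Pi.zero_apply] at hi0
  have hi0' : i0 ∈ Sd := by rw [hSd]; simp [hi0]
  rw [goppa_aux_factor α d Sd (fun i hi => by
    by_contra h; exact hi (by rw [hSd]; simp [h]))] at hd
  have hcop : IsCoprime G (∏ j ∈ Finset.univ \ Sd, (X - C (α j))) :=
    IsCoprime.prod_right fun j _ => (goppa_aux_coprime (hLall j)).symm
  have hdvdg : G ∣ ∑ i ∈ Sd, C (algebraMap F E (d i)) * ∏ j ∈ Sd.erase i, (X - C (α j)) :=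
    hcop.dvd_of_dvd_mul_left hd
  have hgne2 : (∑ i ∈ Sd, C (algebraMap F E (d i)) * ∏ j ∈ Sd.erase i, (X - C (α j))) ≠ 0 := by
    intro h
    have hev := goppa_aux_eval α d Sd hi0'
    rw [h, eval_zero] at hev
    have h1 : algebraMap F E (d i0) ≠ 0 := fun hh =>
      hi0 ((algebraMap F E).injective (by rw [hh, map_zero]))
    have h2 : ∏ j ∈ Sd.erase i0, (α i0 - α j) ≠ 0 :=
      Finset.prod_ne_zero_iff.mpr fun j hj =>
        sub_ne_zero.mpr (fun heq => (Finset.mem_erase.mp hj).1 (hα heq.symm))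
    exact mul_ne_zero h1 h2 hev.symm
  have hdegG := natDegree_le_of_dvd hdvdg hgne2
  rw [hGdeg] at hdegG
  have hdegle : (∑ i ∈ Sd, C (algebraMap F E (d i)) * ∏ j ∈ Sd.erase i,
      (X - C (α j))).natDegree ≤ Sd.card - 1 :=
    goppa_aux_deg Sd _ α (Sd.card - 1) (fun i hi => by rw [Finset.card_erase_of_mem hi])
  have h1S : 1 ≤ Sd.card := Finset.card_pos.mpr ⟨i0, hi0'⟩
  rw [hnormd]
  omega
end

section
/- Let p be a prime. Then the polynomial H(X) = X^p + X^{p−1} − 1 is irreducible over the field F_p = Z/pZ. -/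
/-!
If `β` is a root of `H = X^p + X^(p-1) - 1` in `𝔽̄_p`, then `α = β⁻¹` is a root of the
Artin–Schreier polynomial `X^p - X - 1`, so Frobenius acts by `α ↦ α + 1` and
`α^(p^n) = α + n`. On the other hand `β^(p^d) = β` where `d` is the degree of `β` over `𝔽_p`;
hence `p ∣ d`. Since `d ≤ deg H = p`, the polynomial `H` is the minimal polynomial of `β`.
-/

open Polynomial

section ArtinSchreier

variable {R : Type*} [CommRing R] {p : ℕ} [Fact p.Prime] [CharP R p] {α : R}

theorem pow_char_pow_eq_add_natCast (hα : α ^ p = α + 1) (n : ℕ) : α ^ p ^ n = α + n := by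
  induction n with
  | zero => simp
  | succ n ih =>
    have hn : (n : R) ^ p = n := by rw [← frobenius_def, map_natCast]
    rw [pow_succ, pow_mul, ih, add_pow_char, hα, hn]
    push_cast
    ring

theorem char_dvd_of_pow_char_pow_eq_self (hα : α ^ p = α + 1) {n : ℕ} (hn : α ^ p ^ n = α) :
    p ∣ n := by
  rw [← CharP.cast_eq_zero_iff R p]
  simpa [pow_char_pow_eq_add_natCast hα] using hn

end ArtinSchreier

theorem pow_card_pow_natDegree_minpoly {k B : Type*} [Field k] [Finite k] [Ring B] [IsDomain B]
    [Algebra k B] (x : B) : x ^ Nat.card k ^ (minpoly k x).natDegree = x := by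
  by_cases hx : IsIntegral k x
  · have hdvd := ((minpoly.irreducible hx).natDegree_dvd_iff_dvd_X_pow_card_pow_sub_X
      (n := (minpoly k x).natDegree)).mp dvd_rfl
    simpa [sub_eq_zero] using minpoly.dvd_iff.mp hdvd
  · simp [minpoly.eq_zero hx]

theorem irreducible_of_natDegree_le_natDegree_minpoly {A B : Type*} [Field A] [Ring B]
    [IsDomain B] [Algebra A B] {f : A[X]} {x : B} (hf : f.Monic) (hx : aeval x f = 0)
    (hdeg : f.natDegree ≤ (minpoly A x).natDegree) : Irreducible f := by
  have hint : IsIntegral A x := ⟨f, hf, hx⟩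
  have hdeg' : f.degree ≤ (minpoly A x).degree := by
    rw [degree_eq_natDegree hf.ne_zero, degree_eq_natDegree (minpoly.ne_zero hint)]
    exact_mod_cast hdeg
  rw [minpoly.unique_of_degree_le_degree_minpoly A x hf hx hdeg']
  exact minpoly.irreducible hint

section XPowAddXPowPredSubOne

variable {n : ℕ}

theorem natDegree_X_pow_add_X_pow_pred_sub_one {R : Type*} [Ring R] [Nontrivial R]
    (hn : 2 ≤ n) : (X ^ n + X ^ (n - 1) - 1 : R[X]).natDegree = n := by
  compute_degree!
  rw [if_neg (by omega), if_neg (by omega)]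
  simp

theorem monic_X_pow_add_X_pow_pred_sub_one {R : Type*} [Ring R] (hn : 2 ≤ n) :
    (X ^ n + X ^ (n - 1) - 1 : R[X]).Monic := by
  monicity!
  rw [if_neg (by omega), if_neg (by omega)]
  simp

theorem inv_pow_eq_inv_add_one_of_pow_add_pow_pred_eq_one {K : Type*} [Field K] (hn : 2 ≤ n)
    {β : K} (hβ : β ^ n + β ^ (n - 1) = 1) : β⁻¹ ^ n = β⁻¹ + 1 := by
  obtain ⟨m, rfl⟩ : ∃ m, n = m + 2 := ⟨n - 2, by omega⟩
  rw [show m + 2 - 1 = m + 1 by omega] at hβ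
  have hβ0 : β ≠ 0 := by rintro rfl; simp at hβ
  have hmul : (β⁻¹ + 1) * β ^ (m + 2) = 1 := by
    linear_combination hβ + β ^ (m + 1) * inv_mul_cancel₀ hβ0
  rw [inv_pow]
  exact (eq_inv_of_mul_eq_one_left hmul).symm

end XPowAddXPowPredSubOne

/-- Lemma: for any prime `p`, the polynomial
`H(X) = X^p + X^{p-1} - 1` is irreducible over `F_p = ℤ/pℤ`. -/
theorem xp_add_xpow_pred_sub_one_irreducible
    (p : ℕ) [Fact p.Prime] :
    Irreducible (X ^ p + X ^ (p - 1) - 1 : Polynomial (ZMod p)) := by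
  have hp : 2 ≤ p := (Fact.out : p.Prime).two_le
  set H : (ZMod p)[X] := X ^ p + X ^ (p - 1) - 1
  have hmonic : H.Monic := monic_X_pow_add_X_pow_pred_sub_one hp
  have hdeg : H.natDegree = p := natDegree_X_pow_add_X_pow_pred_sub_one hp
  obtain ⟨β, hβ⟩ := IsAlgClosed.exists_aeval_eq_zero (AlgebraicClosure (ZMod p)) H
    (by rw [degree_eq_natDegree hmonic.ne_zero, hdeg]; exact_mod_cast (by omega : p ≠ 0))
  have hα : β⁻¹ ^ p = β⁻¹ + 1 :=
    inv_pow_eq_inv_add_one_of_pow_add_pow_pred_eq_one hp (by simpa [H, sub_eq_zero] using hβ)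
  have hα_fixed : β⁻¹ ^ p ^ (minpoly (ZMod p) β).natDegree = β⁻¹ := by
    simpa using congr_arg Inv.inv (pow_card_pow_natDegree_minpoly (k := ZMod p) β)
  have hp_dvd : p ∣ (minpoly (ZMod p) β).natDegree :=
    char_dvd_of_pow_char_pow_eq_self hα hα_fixed
  have hd_pos := minpoly.natDegree_pos (Algebra.IsIntegral.isIntegral (R := ZMod p) β)
  exact irreducible_of_natDegree_le_natDegree_minpoly hmonic hβ
    (hdeg.trans_le (Nat.le_of_dvd hd_pos hp_dvd))
end

section
/- Let p be a prime. Then the polynomial M(Y) = Y^p + Y^{p−1} + ⋯ + Y − 1 = (Σ_{k=1}^{p} Y^k) − 1 is irreducible over the field F_p = Z/pZ. -/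
open Polynomial

private lemma nat_cast_pow_char {K : Type*} [CommRing K] (p : ℕ) [Fact p.Prime] [CharP K p]
    (n : ℕ) : (n : K) ^ p = n := by
  induction n with
  | zero => simp [zero_pow, (Fact.out : p.Prime).ne_zero]
  | succ n ih => push_cast; rw [add_pow_char, ih, one_pow]

private lemma artin_schreier_iter {K : Type*} [CommRing K] (p : ℕ) [Fact p.Prime] [CharP K p]
    {γ : K} (h : γ ^ p = γ + 1) (k : ℕ) : γ ^ (p ^ k) = γ + k := by
  induction k with
  | zero => simp
  | succ n ih =>
    rw [pow_succ, pow_mul, ih, add_pow_char, h, nat_cast_pow_char]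
    push_cast; ring

/-- Lemma: for any prime `p`, the polynomial
`M(Y) = Y^p + Y^{p-1} + ⋯ + Y - 1 = (∑_{k=1}^p Y^k) - 1` is irreducible over
`F_p = ℤ/pℤ`. -/
theorem geometric_sum_sub_one_irreducible
    (p : ℕ) [Fact p.Prime] :
    Irreducible ((∑ k ∈ Finset.Icc 1 p, X ^ k) - 1 : Polynomial (ZMod p)) := by
  have hp : p.Prime := Fact.out
  have hp1 : 1 ≤ p := hp.one_lt.le
  set M : Polynomial (ZMod p) := (∑ k ∈ Finset.Icc 1 p, X ^ k) - 1 with hM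
  -- degree facts
  have hcoeff : M.coeff p = 1 := by
    rw [hM, coeff_sub, Polynomial.finset_sum_coeff]
    simp only [coeff_X_pow]
    rw [Finset.sum_ite_eq (Finset.Icc 1 p) p (fun _ => (1 : ZMod p))]
    simp [hp1, Polynomial.coeff_one, hp.ne_zero]
  have hdegle : M.natDegree ≤ p := by
    refine le_trans (natDegree_sub_le _ _) (max_le ?_ (by simp))
    refine le_trans (natDegree_sum_le _ _) ?_
    simp only [Finset.fold_max_le]
    refine ⟨Nat.zero_le _, fun k hk => ?_⟩
    simpa using (Finset.mem_Icc.mp hk).2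
  have hmonic : M.Monic := monic_of_natDegree_le_of_coeff_eq_one p hdegle hcoeff
  have hdeg : M.natDegree = p :=
    le_antisymm hdegle (le_natDegree_of_ne_zero (by rw [hcoeff]; exact one_ne_zero))
  have hMnu : ¬ IsUnit M := by
    intro h
    have := natDegree_eq_zero_of_isUnit h
    omega
  -- take a monic irreducible factor g of M; it suffices to show g = M
  obtain ⟨g, hgm, hgi, hgd⟩ := M.exists_monic_irreducible_factor hMnu
  suffices h : M = g by rw [h]; exact hgi
  refine eq_of_monic_of_dvd_of_natDegree_le hgm hmonic hgd ?_
  rw [hdeg]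
  -- work in the field K = AdjoinRoot g
  haveI := Fact.mk hgi
  set K := AdjoinRoot g with hK
  haveI : CharP K p := charP_of_injective_algebraMap (algebraMap (ZMod p) K).injective p
  set α : K := AdjoinRoot.root g with hα
  have hroot : (Polynomial.aeval α) M = 0 := by
    obtain ⟨q, hq⟩ := hgd
    rw [hq, map_mul, hα, AdjoinRoot.aeval_eq, AdjoinRoot.mk_self, zero_mul]
  -- the key relation: α * S = 1 where S = ∑_{i<p} α^i
  set S : K := ∑ i ∈ Finset.range p, α ^ i with hS
  have h2 : (∑ k ∈ Finset.Icc 1 p, α ^ k) = α * S := by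
    rw [hS, Finset.mul_sum]
    rw [show Finset.Icc 1 p = Finset.Icc (0 + 1) (p - 1 + 1) by congr 1; omega]
    rw [← Finset.map_add_right_Icc 0 (p - 1) 1, Finset.sum_map]
    rw [show Finset.range p = Finset.Icc 0 (p - 1) from
      Nat.range_eq_Icc_zero_sub_one p hp.ne_zero]
    refine Finset.sum_congr rfl fun i _ => ?_
    simp [addRightEmbedding_apply, pow_succ]
    ring
  have hsum : α * S = 1 := by
    have h0 : (∑ k ∈ Finset.Icc 1 p, α ^ k) - 1 = 0 := by
      simpa [hM, map_sub, map_sum] using hroot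
    rw [h2] at h0
    exact sub_eq_zero.mp h0
  have hgeom : S * (α - 1) = α ^ p - 1 := geom_sum_mul α p
  have key : α * (α ^ p - 1) = α - 1 := by
    calc α * (α ^ p - 1) = α * (S * (α - 1)) := by rw [hgeom]
    _ = (α * S) * (α - 1) := by ring
    _ = α - 1 := by rw [hsum, one_mul]
  have hα1 : α ≠ 1 := by
    intro h
    rw [h, hS, h] at hsum
    simp only [one_pow, Finset.sum_const, Finset.card_range, nsmul_eq_mul, mul_one,
      one_mul] at hsum
    rw [CharP.cast_eq_zero K p] at hsum
    exact zero_ne_one hsum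
  have hβ0 : α - 1 ≠ 0 := sub_ne_zero.mpr hα1
  set γ : K := (α - 1)⁻¹ with hγdef
  have hinv : (α - 1) * γ = 1 := mul_inv_cancel₀ hβ0
  have e1 : γ + 1 = α * γ := by linear_combination -hinv
  have hsp : (α - 1) ^ p = α ^ p - 1 := by rw [sub_pow_char, one_pow]
  have hmul : (α * γ) * (α ^ p - 1) = 1 := by linear_combination γ * key + hinv
  have hγ : γ ^ p = γ + 1 := by
    rw [hγdef, inv_pow, hsp, inv_eq_of_mul_eq_one_left hmul, ← e1, hγdef]
  -- K is a finite field of cardinality p ^ d, d = natDegree g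
  have hg0 : g ≠ 0 := hgm.ne_zero
  let pb : PowerBasis (ZMod p) K := AdjoinRoot.powerBasis hg0
  haveI : Module.Finite (ZMod p) K := pb.finite
  haveI : Finite K := Module.finite_of_finite (ZMod p)
  haveI : Fintype K := Fintype.ofFinite K
  have hcard : Fintype.card K = p ^ g.natDegree := by
    rw [Module.card_fintype pb.basis, ZMod.card, Fintype.card_fin]
    rfl
  have hfix : γ ^ (p ^ g.natDegree) = γ := by
    rw [← hcard]; exact FiniteField.pow_card γ
  rw [artin_schreier_iter p hγ g.natDegree] at hfix
  have hd0 : (g.natDegree : K) = 0 := by linear_combination hfix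
  have hdvd : p ∣ g.natDegree := (CharP.cast_eq_zero_iff K p _).mp hd0
  exact Nat.le_of_dvd hgi.natDegree_pos hdvd
end

section
/- Let p be an odd prime and define L(X) = X^{2p+1} + X^{2p} + ⋯ + X^2 − X − 1 = (Σ_{k=2}^{2p+1} X^k) − X − 1 ∈ F_p[X]. Then the splitting field of L(X) over F_p is the field with p^p elements; that is, the Galois field GF(p, p) of order p^p is a splitting field of L over F_p = Z/pZ. -/
/-!
In characteristic `p = 2m + 1` one has `(X - 1) L = X^(2p+2) - 2X^2 + 1`, whence
`L = (X + 1) ((X (X^2 - 1)^m)^2 - 1)`. For a root `α` of the second factor, `y = α^2` satisfies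
`y^(p+1) = 2y - 1`, so Frobenius acts on `y` as the Möbius map `y ↦ 2 - 1/y`, whose matrix
`[[2, -1], [1, 0]]` is unipotent of order `p`; hence `y^(p^p) = y`. As `e = α (α^2 - 1)^m = ±1` is
fixed by Frobenius as well, `α^(p^p) = α`, so all roots of `L` lie in `GF(p, p)`. None of the
roots of the second factor lies in `F_p` (that would force `y = 1`, hence `e = 0`), so the roots
generate a subfield strictly larger than `F_p`, which is all of `GF(p, p)` since
`[GF(p, p) : F_p] = p` is prime.
-/

open Polynomial

section CharP

variable {R : Type*} [CommRing R] {p : ℕ} [Fact p.Prime] [CharP R p]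

-- `[[k + 1, -k], [k, 1 - k]]` is the `k`-th power of `[[2, -1], [1, 0]]`.
theorem pow_char_pow_mul_eq_of_pow_char_mul_eq {y : R} (hy : y ^ p * y = 2 * y - 1) (k : ℕ) :
    y ^ p ^ k * (k * y + 1 - k) = (k + 1) * y - k := by
  induction k with
  | zero => simp
  | succ k ih =>
    have hfrob := congrArg (frobenius R p) ih
    simp only [map_mul, map_sub, map_add, map_natCast, map_one, frobenius_def, ← pow_mul,
      ← pow_succ] at hfrob
    push_cast
    linear_combination y * hfrob + (k + 1 - k * y ^ p ^ (k + 1)) * hy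

theorem pow_char_pow_char_eq_self_of_pow_char_mul_eq {y : R} (hy : y ^ p * y = 2 * y - 1) :
    y ^ p ^ p = y := by
  simpa using pow_char_pow_mul_eq_of_pow_char_mul_eq hy p

theorem sq_pow_char_mul_eq_of_sq_eq_one {m : ℕ} (hm : p = 2 * m + 1) {α : R}
    (he : (α * (α ^ 2 - 1) ^ m) ^ 2 = 1) : (α ^ 2) ^ p * α ^ 2 = 2 * α ^ 2 - 1 := by
  have h : α ^ 2 * (α ^ 2 - 1) ^ p = α ^ 2 - 1 := by
    rw [hm]
    linear_combination (α ^ 2 - 1) * he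
  rw [sub_pow_char, one_pow] at h
  linear_combination h

variable [IsDomain R] {m : ℕ} {α : R}

theorem pow_char_pow_char_eq_self_of_sq_eq_one (hm : p = 2 * m + 1)
    (he : (α * (α ^ 2 - 1) ^ m) ^ 2 = 1) : α ^ p ^ p = α := by
  have hsq : (α ^ 2) ^ p ^ p = α ^ 2 :=
    pow_char_pow_char_eq_self_of_pow_char_mul_eq (sq_pow_char_mul_eq_of_sq_eq_one hm he)
  obtain ⟨j, hj⟩ : Odd (p ^ p) := Odd.pow ⟨m, hm⟩
  have he_fixed : (α * (α ^ 2 - 1) ^ m) ^ p ^ p = α * (α ^ 2 - 1) ^ m := by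
    rw [hj, pow_succ, pow_mul, he, one_pow, one_mul]
  have he_frob : (α * (α ^ 2 - 1) ^ m) ^ p ^ p = α ^ p ^ p * (α ^ 2 - 1) ^ m := by
    rw [mul_pow, ← pow_mul, mul_comm m, pow_mul, sub_pow_char_pow, hsq, one_pow]
  have hne : (α ^ 2 - 1) ^ m ≠ 0 := fun h => by simp [h] at he
  exact mul_right_cancel₀ hne (he_frob.symm.trans he_fixed)

theorem pow_char_ne_self_of_sq_eq_one (hm : p = 2 * m + 1)
    (he : (α * (α ^ 2 - 1) ^ m) ^ 2 = 1) : α ^ p ≠ α := by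
  intro hfix
  have hy := sq_pow_char_mul_eq_of_sq_eq_one hm he
  rw [← pow_mul, mul_comm 2 p, pow_mul, hfix] at hy
  have hα : α ^ 2 = 1 := by
    have : (α ^ 2 - 1) ^ 2 = 0 := by linear_combination hy
    exact sub_eq_zero.mp (pow_eq_zero_iff two_ne_zero |>.mp this)
  have hm0 : m ≠ 0 := by
    rintro rfl
    exact (Fact.out : p.Prime).one_lt.ne' hm
  rw [hα, sub_self, zero_pow hm0, mul_zero] at he
  simp at he

end CharP

theorem sum_Icc_pow_sub_X_sub_one_eq {R : Type*} [CommRing R] {p : ℕ} [Fact p.Prime]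
    [CharP R p] {m : ℕ} (hm : p = 2 * m + 1) :
    (∑ k ∈ Finset.Icc 2 (2 * p + 1), X ^ k) - X - 1 =
      (X + 1) * ((X * (X ^ 2 - 1) ^ m) ^ 2 - 1 : R[X]) := by
  apply (monic_X_sub_C (1 : R)).isRegular.right
  have hgeom : (∑ k ∈ Finset.Icc 2 (2 * p + 1), X ^ k) * (X - 1) =
      (X ^ (2 * p + 2) - X ^ 2 : R[X]) := by
    rw [← Finset.Ico_add_one_right_eq_Icc, geom_sum_Ico_mul _ (by omega)]
    rfl
  have hfrob : (X ^ 2 - 1 : R[X]) ^ p = X ^ (2 * p) - 1 := by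
    rw [sub_pow_char, one_pow, ← pow_mul]
  simp only [C_1]
  subst hm
  linear_combination hgeom - X ^ 2 * hfrob

theorem natDegree_sq_X_mul_sq_sub_one_pow_sub_one {R : Type*} [CommRing R] [Nontrivial R]
    (m : ℕ) : ((X * (X ^ 2 - 1) ^ m) ^ 2 - 1 : R[X]).natDegree = 4 * m + 2 := by
  compute_degree! <;> omega

theorem FiniteField.mem_range_of_pow_card_eq {K S : Type*} [Field K] [Finite K] [CommRing S]
    [IsDomain S] (i : K →+* S) {x : S} (hx : x ^ Nat.card K = x) : x ∈ i.range := by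
  have := Fintype.ofFinite K
  refine (FiniteField.isSplittingField_sub K K).splits.mem_range_of_isRoot ?_ ?_
  · simpa using FiniteField.X_pow_card_sub_X_ne_zero K (p := Fintype.card K) Fintype.one_lt_card
  · simpa [sub_eq_zero, Nat.card_eq_fintype_card] using hx

theorem FiniteField.splits_map_of_forall_pow_card_eq {F K : Type*} [Field F] [Field K]
    [Finite K] [Algebra F K] {f : F[X]}
    (hf : ∀ x : AlgebraicClosure K, aeval x f = 0 → x ^ Nat.card K = x) :
    (f.map (algebraMap F K)).Splits := by
  refine Splits.of_splits_map (algebraMap K (AlgebraicClosure K)) (IsAlgClosed.splits _)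
    fun x hx => FiniteField.mem_range_of_pow_card_eq _ (hf x ?_)
  rw [mem_roots', Polynomial.map_map, ← IsScalarTower.algebraMap_eq, IsRoot,
    eval_map_algebraMap] at hx
  exact hx.2

theorem IsSplittingField.of_finrank_prime {K L : Type*} [Field K] [Field L] [Algebra K L]
    (hprime : (Module.finrank K L).Prime) {f : K[X]} (hf : (f.map (algebraMap K L)).Splits)
    {α : L} (hα : α ∈ f.rootSet L) (hα_notMem : α ∉ (⊥ : Subalgebra K L)) :
    IsSplittingField K L f := by
  have := Subalgebra.isSimpleOrder_of_finrank_prime K L hprime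
  exact ⟨hf, (eq_bot_or_eq_top _).resolve_left fun hbot =>
    hα_notMem (hbot ▸ Algebra.subset_adjoin hα)⟩

/-- Lemma: for an odd prime `p`, the splitting field of
`L(X) = X^{2p+1} + X^{2p} + ⋯ + X^2 - X - 1 = (∑_{k=2}^{2p+1} X^k) - X - 1` over
`F_p = ℤ/pℤ` is the field `GF(p, p)` with `p^p` elements. -/
theorem splitting_field_of_L
    (p : ℕ) [Fact p.Prime] (hodd : Odd p) :
    Polynomial.IsSplittingField (ZMod p) (GaloisField p p)
      ((∑ k ∈ Finset.Icc 2 (2 * p + 1), X ^ k) - X - 1 : Polynomial (ZMod p)) := by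
  obtain ⟨m, hm⟩ := hodd
  have hp0 : p ≠ 0 := (Fact.out : p.Prime).ne_zero
  rw [sum_Icc_pow_sub_X_sub_one_eq hm]
  set G : (ZMod p)[X] := (X * (X ^ 2 - 1) ^ m) ^ 2 - 1 with hG
  have hGdeg : 0 < G.natDegree := by rw [hG, natDegree_sq_X_mul_sq_sub_one_pow_sub_one]; omega
  have hGsplits : (G.map (algebraMap (ZMod p) (GaloisField p p))).Splits :=
    FiniteField.splits_map_of_forall_pow_card_eq fun x hx => by
      rw [GaloisField.card p p hp0]
      exact pow_char_pow_char_eq_self_of_sq_eq_one hm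
        (by simpa only [hG, map_sub, map_pow, map_mul, aeval_X, map_one, sub_eq_zero] using hx)
  have hX : ((X + 1 : (ZMod p)[X]).map (algebraMap (ZMod p) (GaloisField p p))).Splits := by
    simpa using Splits.X_add_C (1 : GaloisField p p)
  obtain ⟨α, hα⟩ := hGsplits.exists_eval_eq_zero
    (natDegree_pos_iff_degree_pos.mp (by rwa [natDegree_map])).ne'
  rw [eval_map_algebraMap] at hα
  have hα_sq : (α * (α ^ 2 - 1) ^ m) ^ 2 = 1 := by
    simpa only [hG, map_sub, map_pow, map_mul, aeval_X, map_one, sub_eq_zero] using hα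
  refine IsSplittingField.of_finrank_prime (by rw [GaloisField.finrank p hp0]; exact Fact.out)
    (by rw [Polynomial.map_mul]; exact hX.mul hGsplits) (α := α) ?_ ?_
  · exact mem_rootSet.mpr ⟨mul_ne_zero (by simpa using X_add_C_ne_zero (1 : ZMod p))
      (ne_zero_of_natDegree_gt hGdeg), by rw [map_mul, hα, mul_zero]⟩
  · rw [Algebra.mem_bot]
    rintro ⟨c, rfl⟩
    exact pow_char_ne_self_of_sq_eq_one hm hα_sq (by rw [← map_pow, ZMod.pow_card])
end

section
/- Let q be a prime power and let t, m be positive integers with t dividing m and t < m. Let b ∈ E satisfy b^{q^t} ≠ b (i.e., b does not lie in the subfield of E with q^t elements), and set λ = (b − b^{q^t})/(b^{q^t} − b^{q^{2t}}) ∈ E. Define F(X) = X^{q^t + 1} + (1 + λ)·X^{q^t} + λ ∈ E[X]. Then F has exactly q^t + 1 distinct roots in E, and all of these roots are nonzero. -/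
open Polynomial Function

/-!
Write `σ` for the Frobenius power `x ↦ x ^ q ^ t`, so that `F(x) = x σ(x) + (1 + λ) σ(x) + λ`
and `λ σ(b - σ b) = b - σ b`. The Möbius map `μ ↦ -(μ + b) / (μ + σ b)` sends the fixed field
of `σ`, which has `q ^ t` elements because `t ∣ m`, injectively onto the roots of `F` other
than `-1`; its inverse `x ↦ -(b + x σ b) / (x + 1)` takes roots to fixed points precisely
because of the relation defining `λ`. Finally `F(0) = λ ≠ 0`.
-/

theorem pow_sub_self_dvd_pow_pow_sub_self {R : Type*} [CommRing R] (x : R) (a k : ℕ) :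
    x ^ a - x ∣ x ^ a ^ k - x := by
  induction k with
  | zero => simp
  | succ k ih =>
    have h : x ^ a ^ (k + 1) - x = ((x ^ a ^ k) ^ a - x ^ a) + (x ^ a - x) := by
      rw [pow_succ', pow_mul]; ring
    rw [h]
    exact dvd_add (ih.trans (sub_dvd_pow_sub_pow _ _ _)) dvd_rfl

theorem ncard_fixedPoints_iterateFrobenius {E : Type*} [Field E] [Finite E] {p : ℕ}
    [Fact p.Prime] [CharP E p] {n N : ℕ} (hn : n ≠ 0) (hnN : n ∣ N) (hE : Nat.card E = p ^ N) :
    (fixedPoints (iterateFrobenius E p n)).ncard = p ^ n := by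
  have : Fintype E := Fintype.ofFinite E
  have hpn : 1 < p ^ n := Nat.one_lt_pow hn (Fact.out : p.Prime).one_lt
  have hne : (X ^ p ^ n - X : E[X]) ≠ 0 := FiniteField.X_pow_card_sub_X_ne_zero E hpn
  have hsplit : Splits (X ^ p ^ n - X : E[X]) := by
    obtain ⟨k, rfl⟩ := hnN
    refine (splits_X_pow_nat_card_sub_X (K := E)).of_dvd
      (FiniteField.X_pow_card_sub_X_ne_zero E (hE ▸ Finite.one_lt_card)) ?_
    rw [hE, pow_mul]
    exact pow_sub_self_dvd_pow_pow_sub_self X _ k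
  have hroots : fixedPoints (iterateFrobenius E p n) = (X ^ p ^ n - X : E[X]).rootSet E := by
    ext z
    simp [mem_rootSet', hne, sub_eq_zero, IsFixedPt, iterateFrobenius_def]
  rw [hroots, ← Nat.card_coe_set_eq, Nat.card_eq_fintype_card,
    card_rootSet_eq_natDegree (galois_poly_separable p _ (dvd_pow_self p hn))
      (by rwa [Algebra.algebraMap_self, Polynomial.map_id]),
    FiniteField.X_pow_card_sub_X_natDegree_eq E hpn]

section FieldEndomorphism

variable {E : Type*} [Field E] (σ : E →+* E) {b lam : E}

theorem add_map_ne_zero_of_mem_fixedPoints {c μ : E} (hc : σ c ≠ c) (hμ : μ ∈ fixedPoints σ) :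
    μ + σ c ≠ 0 := by
  intro h
  have hμ' : σ μ = μ := hμ
  rw [eq_neg_of_add_eq_zero_left h, map_neg, neg_inj] at hμ'
  exact hc (σ.injective hμ')

theorem injOn_fixedPoints (hb : σ b ≠ b) :
    Set.InjOn (fun μ => -(μ + b) / (μ + σ b)) (fixedPoints σ) := by
  intro μ hμ ν hν h
  rw [div_eq_div_iff (add_map_ne_zero_of_mem_fixedPoints σ hb hμ)
    (add_map_ne_zero_of_mem_fixedPoints σ hb hν)] at h
  have : (μ - ν) * (σ b - b) = 0 := by linear_combination -h
  exact sub_eq_zero.mp ((mul_eq_zero.mp this).resolve_right (sub_ne_zero.mpr hb))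

theorem neg_one_notMem_image_fixedPoints (hb : σ b ≠ b) :
    -1 ∉ (fun μ => -(μ + b) / (μ + σ b)) '' fixedPoints σ := by
  rintro ⟨μ, hμ, h⟩
  rw [div_eq_iff (add_map_ne_zero_of_mem_fixedPoints σ hb hμ)] at h
  exact hb (by linear_combination h)

theorem root_of_mem_fixedPoints (hb : σ b ≠ b) (hlam : lam * (σ b - σ (σ b)) = b - σ b)
    {μ : E} (hμ : μ ∈ fixedPoints σ) (x : E) (hx : x = -(μ + b) / (μ + σ b)) :
    x * σ x + (1 + lam) * σ x + lam = 0 := by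
  have hσb : μ + σ b ≠ 0 := add_map_ne_zero_of_mem_fixedPoints σ hb hμ
  have hσσb : μ + σ (σ b) ≠ 0 :=
    add_map_ne_zero_of_mem_fixedPoints σ (fun h => hb (σ.injective h)) hμ
  have hσx : σ x = -(μ + σ b) / (μ + σ (σ b)) := by
    simp only [hx, map_div₀, map_neg, map_add, hμ.eq]
  rw [hσx, hx]
  field_simp
  linear_combination -hlam

theorem exists_mem_fixedPoints_of_root (hb : σ b ≠ b) (hlam : lam * (σ b - σ (σ b)) = b - σ b)
    {x : E} (hx : x * σ x + (1 + lam) * σ x + lam = 0) (hx1 : x ≠ -1) :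
    ∃ μ ∈ fixedPoints σ, -(μ + b) / (μ + σ b) = x := by
  have h1 : x + 1 ≠ 0 := fun h => hx1 (eq_neg_of_add_eq_zero_left h)
  have hσ1 : σ x + 1 ≠ 0 := by rw [← map_one σ, ← map_add]; exact (map_ne_zero σ).mpr h1
  refine ⟨-(b + x * σ b) / (x + 1), ?_, ?_⟩
  · change σ _ = _
    rw [map_div₀, map_neg, map_add, map_mul, map_add, map_one, div_eq_div_iff hσ1 h1]
    linear_combination (σ b - σ (σ b)) * hx - (σ x + 1) * hlam
  · have hden : -(b + x * σ b) / (x + 1) + σ b = (σ b - b) / (x + 1) := by field_simp; ring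
    rw [div_eq_iff (by rw [hden]; exact div_ne_zero (sub_ne_zero.mpr hb) h1), hden]
    field_simp
    ring

theorem setOf_root_eq_insert_image (hb : σ b ≠ b) (hlam : lam * (σ b - σ (σ b)) = b - σ b) :
    {x | x * σ x + (1 + lam) * σ x + lam = 0} =
      insert (-1) ((fun μ => -(μ + b) / (μ + σ b)) '' fixedPoints σ) := by
  ext x
  constructor
  · intro hx
    by_cases hx1 : x = -1
    · exact Or.inl hx1
    · exact Or.inr (exists_mem_fixedPoints_of_root σ hb hlam hx hx1)
  · rintro (rfl | ⟨μ, hμ, rfl⟩)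
    · simp only [Set.mem_ofPred_eq, map_neg, map_one]
      ring
    · exact root_of_mem_fixedPoints σ hb hlam hμ _ rfl

theorem ncard_setOf_root [Finite E] (hb : σ b ≠ b) (hlam : lam * (σ b - σ (σ b)) = b - σ b) :
    {x | x * σ x + (1 + lam) * σ x + lam = 0}.ncard = (fixedPoints σ).ncard + 1 := by
  rw [setOf_root_eq_insert_image σ hb hlam,
    Set.ncard_insert_of_notMem (neg_one_notMem_image_fixedPoints σ hb) (Set.toFinite _),
    (injOn_fixedPoints σ hb).ncard_image]

end FieldEndomorphism

theorem aux_polynomial_qt_plus_one_roots_general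
    (q t m : ℕ) (hq : IsPrimePow q) (ht : 0 < t) (htm : t ∣ m)
    (E : Type) [Field E] [Fintype E]
    (hE : Fintype.card E = q ^ m)
    (b : E) (hb : b ^ q ^ t ≠ b)
    (lam : E) (hlam : lam = (b - b ^ q ^ t) / (b ^ q ^ t - b ^ q ^ (2 * t))) :
    {x : E | (X ^ (q ^ t + 1) + C (1 + lam) * X ^ q ^ t + C lam : Polynomial E).eval x
        = 0}.ncard = q ^ t + 1 ∧
    ∀ x : E,
      (X ^ (q ^ t + 1) + C (1 + lam) * X ^ q ^ t + C lam : Polynomial E).eval x = 0 →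
      x ≠ 0 := by
  obtain ⟨p, e, hp, he, rfl⟩ := hq
  have : Fact p.Prime := ⟨Nat.prime_iff.mpr hp⟩
  have : CharP E p := charP_of_card_eq_prime_pow (f := e * m) (by rw [hE, pow_mul])
  set σ := iterateFrobenius E p (e * t)
  have hσ (x : E) : σ x = x ^ (p ^ e) ^ t := by rw [← pow_mul]; rfl
  have hb' : σ b ≠ b := by rwa [hσ]
  have hlam' : lam * (σ b - σ (σ b)) = b - σ b := by
    have hσσ : σ (σ b) = b ^ (p ^ e) ^ (2 * t) := by rw [hσ, hσ, ← pow_mul]; ring_nf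
    rw [hlam, hσσ, ← hσ, div_mul_cancel₀]
    rw [← hσσ, ← map_sub]
    exact (map_ne_zero σ).mpr (sub_ne_zero.mpr hb'.symm)
  have heval (x : E) : (X ^ ((p ^ e) ^ t + 1) + C (1 + lam) * X ^ (p ^ e) ^ t + C lam).eval x =
      x * σ x + (1 + lam) * σ x + lam := by
    simp only [eval_add, eval_mul, eval_pow, eval_X, eval_C, hσ, pow_succ']
  simp only [heval]
  refine ⟨?_, fun x hx hx0 => ?_⟩
  · rw [ncard_setOf_root σ hb' hlam', ncard_fixedPoints_iterateFrobenius (N := e * m)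
      (by positivity) (mul_dvd_mul_left e htm) (by rw [Nat.card_eq_fintype_card, hE, pow_mul]),
      pow_mul]
  · rw [hx0, map_zero, mul_zero, zero_add, mul_zero, zero_add] at hx
    rw [hx, zero_mul, eq_comm, sub_eq_zero] at hlam'
    exact hb' hlam'.symm

/-- Lemma: roots of `F(X) = X^{q^t+1} + (1+λ)X^{q^t} + λ`.
Let `t ∣ m`, `t < m`, let `b ∈ E` with `b^{q^t} ≠ b`, and set
`λ = (b - b^{q^t})/(b^{q^t} - b^{q^{2t}})`. Then
`F(X) = X^{q^t+1} + (1+λ)X^{q^t} + λ` has exactly `q^t + 1` distinct roots in `E`,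
all of which are nonzero. -/
theorem aux_polynomial_qt_plus_one_roots
    (q t m : ℕ) (hq : IsPrimePow q) (ht : 0 < t) (htm : t ∣ m) (htm' : t < m)
    (F E : Type) [Field F] [Fintype F] [Field E] [Fintype E] [Algebra F E]
    (hF : Fintype.card F = q) (hE : Fintype.card E = q ^ m)
    (b : E) (hb : b ^ q ^ t ≠ b)
    (lam : E) (hlam : lam = (b - b ^ q ^ t) / (b ^ q ^ t - b ^ q ^ (2 * t))) :
    {x : E | (X ^ (q ^ t + 1) + C (1 + lam) * X ^ q ^ t + C lam : Polynomial E).eval x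
        = 0}.ncard = q ^ t + 1 ∧
    ∀ x : E,
      (X ^ (q ^ t + 1) + C (1 + lam) * X ^ q ^ t + C lam : Polynomial E).eval x = 0 →
      x ≠ 0 :=
  aux_polynomial_qt_plus_one_roots_general q t m hq ht htm E hE b hb lam hlam
end

section
/- Let q be a prime power, m a positive integer, n = q^m − 1, α a primitive element of E, and let t be an integer with 1 ≤ t ≤ n − 1. Take the ordered support L = (1, α, α^2, …, α^{n−1}) (all nonzero elements of E) and the Goppa polynomial G(X) = X^t. Then for every c = (c_0, c_1, …, c_{n−1}) ∈ F^n, c belongs to the Goppa code Γ_q(L, G) if and only if Σ_{i=0}^{n−1} c_i (α^{−1})^{i·j} = 0 in E for every 1 ≤ j ≤ t; that is, Γ_q(L, G) equals the narrow-sense primitive BCH code C_{(q, n, t+1, 1)} defined with respect to the primitive element β = α^{−1}. -/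
open Polynomial

/-- Lemma: equivalence of the Goppa code with `G(X) = X^t` and the
narrow-sense primitive BCH code. Let `n = q^m - 1`, `α` a primitive element of `E`,
and `1 ≤ t ≤ n - 1`. With ordered support `L = (1, α, …, α^{n-1})` and
`G(X) = X^t`, a word `c ∈ F^n` lies in `Γ_q(L, G)` iff
`∑_i c_i (α⁻¹)^{i·j} = 0` for all `1 ≤ j ≤ t`; i.e. `Γ_q(L, G)` is the narrow-sense
primitive BCH code `C_(q, n, t+1, 1)` with respect to the primitive element `α⁻¹`. -/
theorem goppa_eq_bch
    (q m t : ℕ) (hq : IsPrimePow q) (hm : 0 < m)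
    (ht1 : 1 ≤ t) (htn : t ≤ q ^ m - 1 - 1)
    (F E : Type) [Field F] [Fintype F] [Field E] [Fintype E] [Algebra F E]
    (hF : Fintype.card F = q) (hE : Fintype.card E = q ^ m)
    (α : E) (hα : ∀ x : E, x ≠ 0 → ∃ k : ℕ, x = α ^ k) :
    ∀ c : Fin (q ^ m - 1) → F,
      c ∈ goppaCode F (fun i : Fin (q ^ m - 1) => α ^ (i : ℕ)) (X ^ t : Polynomial E) ↔
      ∀ j : ℕ, 1 ≤ j → j ≤ t →
        ∑ i : Fin (q ^ m - 1), algebraMap F E (c i) * (α⁻¹) ^ ((i : ℕ) * j) = 0 := by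
  classical
  have hEQ := hE
  set Q := q ^ m with hQdef
  clear_value Q
  clear hE hF hq hm hQdef
  set n := Q - 1 with hn
  intro c
  have hQ3 : 3 ≤ Q := by omega
  have hn2 : 2 ≤ n := by omega
  -- α ≠ 0
  have hcardU : 1 < Fintype.card Eˣ := by rw [Fintype.card_units, hEQ]; omega
  obtain ⟨u, hu⟩ := Fintype.exists_ne_of_one_lt_card hcardU (1 : Eˣ)
  have hα0 : α ≠ 0 := by
    intro h
    obtain ⟨k, hk⟩ := hα u (Units.ne_zero u)
    rcases Nat.eq_zero_or_pos k with hk0 | hk0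
    · exact hu (Units.ext (by simpa [hk0] using hk))
    · exact (Units.ne_zero u) (by rw [hk, h, zero_pow hk0.ne'])
  have hαn : α ^ n = 1 := by
    have := FiniteField.pow_card_sub_one_eq_one α hα0
    rwa [hEQ] at this
  -- the map i ↦ α^i is a bijection onto nonzero elements
  have hg : Function.Bijective
      (fun i : Fin n => (⟨α ^ (i : ℕ), pow_ne_zero _ hα0⟩ : {x : E // x ≠ 0})) := by
    rw [Fintype.bijective_iff_surjective_and_card]
    constructor
    · rintro ⟨x, hx⟩
      obtain ⟨k, hk⟩ := hα x hx
      refine ⟨⟨k % n, Nat.mod_lt _ (by omega)⟩, Subtype.ext ?_⟩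
      show α ^ (k % n) = x
      conv_rhs => rw [hk, ← Nat.div_add_mod k n]
      rw [pow_add, pow_mul, hαn, one_pow, one_mul]
    · rw [Fintype.card_fin, Fintype.card_subtype_compl, Fintype.card_subtype_eq, hEQ]
  -- ∏ x : E, (X - C x) = X^Q - X
  have hQ' : (X : E[X]) ^ Fintype.card E - X = ∏ x : E, (X - C x) := by
    have hmon : (X ^ Fintype.card E - X : E[X]).Monic := by
      apply monic_X_pow_sub
      rw [degree_X]
      exact_mod_cast Fintype.one_lt_card
    have hdeg := FiniteField.X_pow_card_sub_X_natDegree_eq E (Fintype.one_lt_card (α := E))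
    have hroots := FiniteField.roots_X_pow_card_sub_X E
    have h := C_leadingCoeff_mul_prod_multiset_X_sub_C
      (p := X ^ Fintype.card E - X) (by rw [hroots, hdeg]; simp)
    rw [hmon.leadingCoeff, C_1, one_mul] at h
    rw [← h, hroots]
    rfl
  -- full product over Fin n
  have hprodall : ∏ i : Fin n, (X - C (α ^ (i : ℕ))) = X ^ n - 1 := by
    have h1 : (X : E[X]) * ∏ i : Fin n, (X - C (α ^ (i : ℕ))) = X * (X ^ n - 1) := by
      have e1 : ∏ i : Fin n, ((X : E[X]) - C (α ^ (i : ℕ)))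
          = ∏ x : {x : E // x ≠ 0}, (X - C x.1) :=
        Fintype.prod_bijective _ hg _ _ (fun i => rfl)
      have e2 : ∏ x : {x : E // x ≠ 0}, ((X : E[X]) - C x.1)
          = ∏ x ∈ Finset.univ.erase (0 : E), (X - C x) :=
        (Finset.prod_subtype (p := fun x : E => x ≠ 0) (Finset.univ.erase (0 : E))
          (fun x => by simp [Finset.mem_erase]) (fun x => X - C x)).symm
      have e3 : ∏ x : E, ((X : E[X]) - C x)
          = (X - C 0) * ∏ x ∈ Finset.univ.erase (0 : E), (X - C x) :=
        (Finset.mul_prod_erase _ _ (Finset.mem_univ 0)).symm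
      have e4 : (X : E[X]) ^ Q - X = X * ∏ x ∈ Finset.univ.erase (0 : E), (X - C x) := by
        have h5 := hQ'.trans e3
        rwa [C_0, sub_zero, hEQ] at h5
      rw [e1, e2, ← e4, show Q = n + 1 from by omega, pow_succ]
      ring
    exact mul_left_cancel₀ X_ne_zero h1
  -- each punctured product is a geometric sum
  have hQi : ∀ i : Fin n, ∏ j ∈ Finset.univ.erase i, ((X : E[X]) - C (α ^ (j : ℕ)))
      = ∑ k ∈ Finset.range n, C (α ^ ((i : ℕ) * (n - 1 - k))) * X ^ k := by
    intro i
    apply mul_left_cancel₀ (X_sub_C_ne_zero (α ^ (i : ℕ)))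
    rw [Finset.mul_prod_erase Finset.univ
      (fun j : Fin n => (X : E[X]) - C (α ^ (j : ℕ))) (Finset.mem_univ i), hprodall]
    have hgeom := Commute.mul_geom_sum₂ (Commute.all (X : E[X]) (C (α ^ (i : ℕ)))) n
    have hsum : ∑ k ∈ Finset.range n, C (α ^ ((i : ℕ) * (n - 1 - k))) * X ^ k
        = ∑ k ∈ Finset.range n, (X : E[X]) ^ k * C (α ^ (i : ℕ)) ^ (n - 1 - k) := by
      refine Finset.sum_congr rfl fun k _ => ?_
      rw [pow_mul, ← C_pow, mul_comm]
    rw [hsum, hgeom, ← C_pow, ← pow_right_comm, hαn, one_pow, C_1]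
  -- coefficient computation
  have hcoeff : ∀ d, d < n →
      (∑ i : Fin n, C (algebraMap F E (c i)) *
        ∏ j ∈ Finset.univ.erase i, ((X : E[X]) - C (α ^ (j : ℕ)))).coeff d
      = ∑ i : Fin n, algebraMap F E (c i) * α ^ ((i : ℕ) * (n - 1 - d)) := by
    intro d hd
    rw [finset_sum_coeff]
    refine Finset.sum_congr rfl fun i _ => ?_
    rw [hQi i, coeff_C_mul]
    congr 1
    rw [finset_sum_coeff, Finset.sum_eq_single d]
    · simp only [← C_pow, coeff_C_mul, coeff_X_pow]
      simp
    · intro k _ hk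
      simp only [← C_pow, coeff_C_mul, coeff_X_pow]
      rw [if_neg (Ne.symm hk), mul_zero]
    · intro hd'
      exact absurd (Finset.mem_range.mpr hd) hd'
  have hpow : ∀ (i : Fin n) (d : ℕ), d < n →
      α ^ ((i : ℕ) * (n - 1 - d)) = (α⁻¹) ^ ((i : ℕ) * (d + 1)) := by
    intro i d hd
    have h1 : α ^ ((i : ℕ) * (n - 1 - d)) * α ^ ((i : ℕ) * (d + 1)) = 1 := by
      rw [← pow_add, ← Nat.mul_add, show n - 1 - d + (d + 1) = n from by omega,
        mul_comm (i : ℕ) n, pow_mul, hαn, one_pow]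
    rw [inv_pow]
    exact eq_inv_of_mul_eq_one_left h1
  rw [goppaCode, Set.mem_setOf_eq, X_pow_dvd_iff]
  constructor
  · intro h j hj1 hjt
    have h2 := h (j - 1) (by omega)
    rw [hcoeff _ (by omega)] at h2
    rw [← h2]
    refine Finset.sum_congr rfl fun i _ => ?_
    rw [hpow i (j - 1) (by omega), show j - 1 + 1 = j from by omega]
  · intro h d hd
    rw [hcoeff d (by omega)]
    have h2 := h (d + 1) (by omega) (by omega)
    rw [← h2]
    refine Finset.sum_congr rfl fun i _ => ?_
    rw [hpow i d (by omega)]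
end
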